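/- arXiv:2206.08548 — 9 statements merged into one kernel-verified Lean document; each statement's English description precedes it below -/
import Mathlib

section
/- Let X and Y be metric continua and let f : X → Y be a refinable map. If X is colocally connected, then Y is colocally connected. -/
/-- A space is colocally connected if every point has arbitrarily small open
neighborhoods with connected complement. -/
def ColocallyConnected (Z : Type*) [TopologicalSpace Z] : Prop :=
  ∀ z : Z, ∀ V ∈ nhds z, ∃ U : Set Z, IsOpen U ∧ z ∈ U ∧ U ⊆ V ∧ IsConnected Uᶜ

/-- An ε-map: a continuous surjection whose fibers all have diameter < ε. -/
def IsEpsMap {X Y : Type*} [MetricSpace X] [MetricSpace Y] (ε : ℝ) (g : X → Y) : Prop :=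
  Continuous g ∧ Function.Surjective g ∧ ∀ y : Y, Metric.diam (g ⁻¹' {y}) < ε

/-- A refinable map: a continuous surjection admitting ε-refinements for every ε > 0. -/
def Refinable {X Y : Type*} [MetricSpace X] [MetricSpace Y] (f : X → Y) : Prop :=
  Continuous f ∧ Function.Surjective f ∧
    ∀ ε > (0 : ℝ), ∃ g : X → Y, IsEpsMap ε g ∧ ∀ x, dist (f x) (g x) < ε

theorem refinable_preserves_colocally_connected
    {X Y : Type*} [MetricSpace X] [CompactSpace X] [ConnectedSpace X] [Nonempty X]
    [MetricSpace Y] [CompactSpace Y] [ConnectedSpace Y] [Nonempty Y]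
    (f : X → Y) (hf : Refinable f) (hX : ColocallyConnected X) :
    ColocallyConnected Y := by
  obtain ⟨hfc, hfs, href⟩ := hf
  intro y₀ V hV
  obtain ⟨ε₀, hε₀, hball⟩ := Metric.mem_nhds_iff.mp hV
  -- uniform continuity of f
  have hfu : UniformContinuous f := CompactSpace.uniformContinuous_of_continuous hfc
  obtain ⟨ρ, hρ, hρf⟩ := Metric.uniformContinuous_iff.mp hfu (ε₀ / 4) (by positivity)
  -- colocal connectedness at every point, with small neighborhoods
  have key : ∀ x : X, ∃ W : Set X, IsOpen W ∧ x ∈ W ∧ W ⊆ Metric.ball x (ρ / 3) ∧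
      IsConnected Wᶜ := fun x =>
    hX x (Metric.ball x (ρ / 3)) (Metric.ball_mem_nhds x (by positivity))
  choose W hWopen hWmem hWsub hWconn using key
  have key2 : ∀ x : X, ∃ η > 0, Metric.ball x η ⊆ W x := fun x =>
    Metric.isOpen_iff.mp (hWopen x) x (hWmem x)
  choose η hη hηsub using key2
  -- finite subcover by half-radius balls
  obtain ⟨t, ht⟩ := IsCompact.elim_finite_subcover (isCompact_univ (X := X))
    (fun x => Metric.ball x (η x / 2)) (fun x => Metric.isOpen_ball)
    (fun p _ => Set.mem_iUnion.mpr ⟨p, Metric.mem_ball_self (by linarith [hη p])⟩)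
  have htne : t.Nonempty := by
    rcases Finset.eq_empty_or_nonempty t with h | h
    · exfalso
      obtain ⟨p⟩ := ‹Nonempty X›
      have := ht (Set.mem_univ p)
      simp [h] at this
    · exact h
  set δ : ℝ := t.inf' htne (fun x => η x / 2) with hδdef
  have hδ : 0 < δ := by
    rw [hδdef, Finset.lt_inf'_iff]
    intro b _
    linarith [hη b]
  set ε : ℝ := min δ (ε₀ / 4) with hεdef
  have hε : 0 < ε := lt_min hδ (by positivity)
  obtain ⟨g, ⟨hgc, hgs, hgd⟩, hgf⟩ := href ε hε
  obtain ⟨p, hp⟩ := hgs y₀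
  have hpF : p ∈ g ⁻¹' {y₀} := by simp [hp]
  -- locate p in the finite cover
  have hpcov := ht (Set.mem_univ p)
  rw [Set.mem_iUnion₂] at hpcov
  obtain ⟨i, hit, hpi⟩ := hpcov
  -- the fiber over y₀ is contained in W i
  have hbd : Bornology.IsBounded (g ⁻¹' {y₀}) :=
    ((isClosed_singleton.preimage hgc).isCompact).isBounded
  have hδi : δ ≤ η i / 2 := Finset.inf'_le _ hit
  have hFsub : g ⁻¹' {y₀} ⊆ W i := by
    intro q hq
    apply hηsub i
    have h1 : dist q p ≤ Metric.diam (g ⁻¹' {y₀}) := Metric.dist_le_diam_of_mem hbd hq hpF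
    have h2 : Metric.diam (g ⁻¹' {y₀}) < ε := hgd y₀
    have h3 : dist p i < η i / 2 := hpi
    have h4 : ε ≤ δ := min_le_left _ _
    have : dist q i ≤ dist q p + dist p i := dist_triangle q p i
    have : dist q i < η i := by linarith
    exact this
  have hεε₀ : ε ≤ ε₀ / 4 := min_le_right _ _
  refine ⟨(g '' (W i)ᶜ)ᶜ, ?_, ?_, ?_, ?_⟩
  · rw [isOpen_compl_iff]
    exact (((hWopen i).isClosed_compl).isCompact.image hgc).isClosed
  · intro hy
    obtain ⟨q, hq, hgq⟩ := hy
    exact hq (hFsub (by simp [hgq]))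
  · intro y hy
    apply hball
    obtain ⟨x, hx⟩ := hgs y
    have hxW : x ∈ W i := by
      by_contra hxn
      exact hy ⟨x, hxn, hx⟩
    have hpW : p ∈ W i := hFsub hpF
    have hxi : dist x i < ρ / 3 := hWsub i hxW
    have hpi' : dist p i < ρ / 3 := hWsub i hpW
    have hxp : dist x p < ρ := by
      have := dist_triangle x i p
      rw [dist_comm p i] at hpi'
      linarith
    have h5 : dist (f x) (f p) < ε₀ / 4 := hρf hxp
    have h6 : dist (f x) (g x) < ε := hgf x
    have h7 : dist (f p) (g p) < ε := hgf p
    rw [hx] at h6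
    rw [hp] at h7
    have : dist y y₀ ≤ dist y (f x) + dist (f x) (f p) + dist (f p) y₀ :=
      dist_triangle4 y (f x) (f p) y₀
    rw [dist_comm y (f x)] at this
    have : dist y y₀ < ε₀ := by linarith
    exact this
  · rw [compl_compl]
    exact (hWconn i).image g hgc.continuousOn
end

section
/- Let X and Y be metric continua and let f : X → Y be a refinable map. If X is aposyndetic, then Y is aposyndetic. -/
/-- A space is aposyndetic if for any two distinct points x, y there is a
subcontinuum T containing x in its interior and missing y. -/
def Aposyndetic (Z : Type*) [TopologicalSpace Z] : Prop :=
  ∀ x y : Z, x ≠ y → ∃ T : Set Z, IsCompact T ∧ IsConnected T ∧ x ∈ interior T ∧ y ∉ T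

theorem refinable_preserves_aposyndetic
    {X Y : Type*} [MetricSpace X] [CompactSpace X] [ConnectedSpace X] [Nonempty X]
    [MetricSpace Y] [CompactSpace Y] [ConnectedSpace Y] [Nonempty Y]
    (f : X → Y) (hf : Refinable f) (hX : Aposyndetic X) :
    Aposyndetic Y := by
  obtain ⟨hfc, hfs, href⟩ := hf
  intro p q hpq
  -- pick 1/(n+1)-refinements g n
  choose g hg hfg using fun n : ℕ => href (1 / ((n : ℝ) + 1)) (by positivity)
  -- pick points in the fibers of p and q
  choose x hx using fun n : ℕ => (hg n).2.1 p
  choose b hb using fun n : ℕ => (hg n).2.1 q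
  -- extract a convergent subsequence of the pair sequence
  obtain ⟨⟨a, c⟩, -, φ, hφ, hlim⟩ :=
    isCompact_univ.tendsto_subseq (x := fun n => ((x n : X), (b n : X)))
      (fun n => Set.mem_univ _)
  have hlx : Filter.Tendsto (fun k => x (φ k)) Filter.atTop (nhds a) :=
    (continuous_fst.tendsto _).comp hlim
  have hlb : Filter.Tendsto (fun k => b (φ k)) Filter.atTop (nhds c) :=
    (continuous_snd.tendsto _).comp hlim
  have hεlim : Filter.Tendsto (fun k : ℕ => 1 / ((φ k : ℝ) + 1)) Filter.atTop (nhds 0) :=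
    tendsto_one_div_add_atTop_nhds_zero_nat.comp hφ.tendsto_atTop
  -- f a = p
  have hfa : f a = p := by
    have h1 : Filter.Tendsto (fun k => f (x (φ k))) Filter.atTop (nhds (f a)) :=
      (hfc.tendsto a).comp hlx
    have h2 : Filter.Tendsto (fun k => f (x (φ k))) Filter.atTop (nhds p) := by
      rw [tendsto_iff_dist_tendsto_zero]
      refine squeeze_zero (fun k => dist_nonneg) (fun k => ?_) hεlim
      rw [← hx (φ k)]
      exact (hfg (φ k) (x (φ k))).le
    exact tendsto_nhds_unique h1 h2
  -- f c = q
  have hfcq : f c = q := by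
    have h1 : Filter.Tendsto (fun k => f (b (φ k))) Filter.atTop (nhds (f c)) :=
      (hfc.tendsto c).comp hlb
    have h2 : Filter.Tendsto (fun k => f (b (φ k))) Filter.atTop (nhds q) := by
      rw [tendsto_iff_dist_tendsto_zero]
      refine squeeze_zero (fun k => dist_nonneg) (fun k => ?_) hεlim
      rw [← hb (φ k)]
      exact (hfg (φ k) (b (φ k))).le
    exact tendsto_nhds_unique h1 h2
  have hac : a ≠ c := by
    intro h
    exact hpq (by rw [← hfa, ← hfcq, h])
  -- the continuum in X from aposyndesis
  obtain ⟨M, hMcomp, hMconn, haM, hcM⟩ := hX a c hac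
  obtain ⟨ρ, hρ, hball⟩ := Metric.isOpen_iff.mp isOpen_interior a haM
  have hMcl : IsClosed M := hMcomp.isClosed
  obtain ⟨r, hr, hballc⟩ := Metric.isOpen_iff.mp hMcl.isOpen_compl c hcM
  -- choose a good index
  have e1 : ∀ᶠ k in Filter.atTop, dist (x (φ k)) a < ρ / 2 :=
    (Metric.tendsto_nhds.mp hlx) (ρ / 2) (by positivity)
  have e2 : ∀ᶠ k in Filter.atTop, dist (b (φ k)) c < r / 2 :=
    (Metric.tendsto_nhds.mp hlb) (r / 2) (by positivity)
  have e3 : ∀ᶠ k in Filter.atTop, 1 / ((φ k : ℝ) + 1) < min (ρ / 2) (r / 2) := by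
    have := Metric.tendsto_nhds.mp hεlim (min (ρ / 2) (r / 2)) (lt_min (by positivity) (by positivity))
    filter_upwards [this] with k hk
    calc 1 / ((φ k : ℝ) + 1) ≤ |1 / ((φ k : ℝ) + 1)| := le_abs_self _
      _ = dist (1 / ((φ k : ℝ) + 1)) 0 := by rw [Real.dist_eq, sub_zero]
      _ < _ := hk
  obtain ⟨k, h1, h2, h3⟩ := (e1.and (e2.and e3)).exists
  set m := φ k with hm
  set G := g m with hG
  have hεpos : (0:ℝ) < 1 / ((m : ℝ) + 1) := by positivity
  have hερ : 1 / ((m : ℝ) + 1) < ρ / 2 := lt_of_lt_of_le h3 (min_le_left _ _)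
  have hεr : 1 / ((m : ℝ) + 1) < r / 2 := lt_of_lt_of_le h3 (min_le_right _ _)
  -- all points of one fiber of G are within ε of each other
  have hfib : ∀ (y : Y) (z w : X), G z = y → G w = y → dist z w < 1 / ((m : ℝ) + 1) := by
    intro y z w hz hw
    have hbdd : Bornology.IsBounded (G ⁻¹' {y}) :=
      ((isClosed_singleton.preimage (hg m).1).isCompact).isBounded
    exact lt_of_le_of_lt (Metric.dist_le_diam_of_mem hbdd hz hw) ((hg m).2.2 y)
  -- the whole fiber of p lies in the interior of M
  have claim1 : ∀ z : X, G z = p → z ∈ interior M := by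
    intro z hz
    apply hball
    have hzx : dist z (x m) < 1 / ((m : ℝ) + 1) := hfib p z (x m) hz (hx m)
    have : dist z a ≤ dist z (x m) + dist (x m) a := dist_triangle _ _ _
    rw [Metric.mem_ball]
    have := lt_of_le_of_lt this (add_lt_add (lt_trans hzx hερ) h1)
    linarith
  -- M misses the fiber of q
  have claim2 : ∀ z ∈ M, G z ≠ q := by
    intro z hzM hzq
    have hzb : dist z (b m) < 1 / ((m : ℝ) + 1) := hfib q z (b m) hzq (hb m)
    have htri : dist z c ≤ dist z (b m) + dist (b m) c := dist_triangle _ _ _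
    have : dist z c < r := by
      have := lt_of_le_of_lt htri (add_lt_add (lt_trans hzb hεr) h2)
      linarith
    exact hballc (Metric.mem_ball.mpr this) hzM
  -- the image continuum
  refine ⟨G '' M, hMcomp.image (hg m).1, hMconn.image G (hg m).1.continuousOn, ?_, ?_⟩
  · -- p ∈ interior (G '' M)
    have hK : IsClosed (G '' (interior M)ᶜ) :=
      ((isOpen_interior.isClosed_compl).isCompact.image (hg m).1).isClosed
    have hO : IsOpen (G '' (interior M)ᶜ)ᶜ := hK.isOpen_compl
    have hpO : p ∈ (G '' (interior M)ᶜ)ᶜ := by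
      rintro ⟨z, hz1, hz2⟩
      exact hz1 (claim1 z hz2)
    have hsub : (G '' (interior M)ᶜ)ᶜ ⊆ G '' M := by
      intro y hy
      obtain ⟨z, hz⟩ := (hg m).2.1 y
      by_cases hzi : z ∈ interior M
      · exact ⟨z, interior_subset hzi, hz⟩
      · exact absurd ⟨z, hzi, hz⟩ hy
    exact interior_maximal hsub hO hpO
  · rintro ⟨z, hzM, hzq⟩
    exact claim2 z hzM hzq
end

section
/- Every colocally connected continuum is aposyndetic. -/
theorem colocallyConnected_aposyndetic
    {X : Type*} [MetricSpace X] [CompactSpace X] [ConnectedSpace X] [Nonempty X]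
    (hX : ColocallyConnected X) : Aposyndetic X := by
  intro x y hxy
  have hd : 0 < dist x y / 2 := by
    have := dist_pos.mpr hxy
    linarith
  obtain ⟨U, hUopen, hyU, hUV, hUc⟩ :=
    hX y (Metric.ball y (dist x y / 2)) (Metric.ball_mem_nhds y hd)
  refine ⟨Uᶜ, hUopen.isClosed_compl.isCompact, hUc, ?_, fun h => h hyU⟩
  have hx : x ∈ (Metric.closedBall y (dist x y / 2))ᶜ := by
    simp only [Set.mem_compl_iff, Metric.mem_closedBall, not_le]
    have : dist x y / 2 < dist x y := by linarith
    linarith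
  have hsub : (Metric.closedBall y (dist x y / 2))ᶜ ⊆ Uᶜ :=
    Set.compl_subset_compl.mpr (hUV.trans Metric.ball_subset_closedBall)
  exact interior_maximal hsub Metric.isClosed_closedBall.isOpen_compl hx
end

section
/- A metric continuum X is aposyndetic if and only if X is semilocally connected. -/
open Set

lemma isOpen_cc_of_finite {α : Type*} [TopologicalSpace α]
    [Finite (ConnectedComponents α)] (x : α) : IsOpen (connectedComponent x) := by
  rw [← connectedComponents_preimage_singleton, ← isClosed_compl_iff, ← preimage_compl]
  have h : (({(x : ConnectedComponents α)}ᶜ : Set (ConnectedComponents α)))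
      = ⋃ c ∈ ({(x : ConnectedComponents α)}ᶜ : Set (ConnectedComponents α)), {c} := by
    ext c; simp
  rw [h, preimage_iUnion₂]
  apply Set.Finite.isClosed_biUnion (Set.toFinite _)
  intro c _
  obtain ⟨a, rfl⟩ := ConnectedComponents.surjective_coe c
  rw [connectedComponents_preimage_singleton]
  exact isClosed_connectedComponent


/-- A space is semilocally connected if every point has arbitrarily small open
neighborhoods whose complement has finitely many connected components. -/
def SemilocallyConnected (Z : Type*) [TopologicalSpace Z] : Prop :=
  ∀ z : Z, ∀ V ∈ nhds z, ∃ U : Set Z, IsOpen U ∧ z ∈ U ∧ U ⊆ V ∧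
    Finite (ConnectedComponents ↥(Uᶜ))

theorem aposyndetic_iff_semilocallyConnected
    {X : Type*} [MetricSpace X] [CompactSpace X] [ConnectedSpace X] [Nonempty X] :
    Aposyndetic X ↔ SemilocallyConnected X := by
  constructor
  · intro hap z V hV
    obtain ⟨V', hV'V, hV'o, hzV'⟩ := mem_nhds_iff.mp hV
    -- for each y in V'ᶜ find a continuum
    have key : ∀ y : ↥(V'ᶜ), ∃ T : Set X, IsCompact T ∧ IsConnected T ∧
        (y : X) ∈ interior T ∧ z ∉ T := by
      rintro ⟨y, hy⟩
      exact hap y z (fun h => hy (h ▸ hzV'))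
    choose T hTc hTconn hTmem hTz using key
    have hK0 : IsCompact (V'ᶜ) := (hV'o.isClosed_compl).isCompact
    obtain ⟨t, ht⟩ := hK0.elim_finite_subcover (fun i : ↥(V'ᶜ) => interior (T i))
      (fun i => isOpen_interior) (fun y hy => mem_iUnion.mpr ⟨⟨y, hy⟩, hTmem ⟨y, hy⟩⟩)
    set K : Set X := ⋃ i ∈ t, T i with hK
    have hKcl : IsClosed K := Set.Finite.isClosed_biUnion t.finite_toSet
      (fun i _ => (hTc i).isClosed)
    refine ⟨Kᶜ, hKcl.isOpen_compl, ?_, ?_, ?_⟩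
    · simp only [mem_compl_iff, hK, mem_iUnion]
      rintro ⟨i, _, hi⟩; exact hTz i hi
    · intro p hp
      by_contra hpV
      have hpV' : p ∈ V'ᶜ := fun h => hpV (hV'V h)
      obtain ⟨i, hi⟩ := mem_iUnion.mp (ht hpV')
      simp only [mem_iUnion] at hi
      obtain ⟨hit, hpi⟩ := hi
      exact hp (mem_biUnion hit (interior_subset hpi))
    · rw [compl_compl]
      have hmemK : ∀ i : ↥(V'ᶜ), i ∈ t → (i : X) ∈ K := fun i hit =>
        mem_biUnion hit (interior_subset (hTmem i))
      have hsurj : Function.Surjective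
          (fun i : {i : ↥(V'ᶜ) // i ∈ t} =>
            (ConnectedComponents.mk ⟨((i : ↥(V'ᶜ)) : X), hmemK i.1 i.2⟩ :
              ConnectedComponents ↥K)) := by
        rintro c
        obtain ⟨⟨p, hp⟩, rfl⟩ := ConnectedComponents.surjective_coe c
        obtain ⟨i, hi⟩ := mem_iUnion.mp hp
        simp only [mem_iUnion] at hi
        obtain ⟨hit, hpi⟩ := hi
        refine ⟨⟨i, hit⟩, ?_⟩
        -- both points are in the connected subset val ⁻¹' (T i) of K
        have hsub : (Subtype.val ⁻¹' (T i) : Set ↥K) =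
            range (Set.inclusion (show T i ⊆ K from subset_biUnion_of_mem hit)) := by
          ext q
          constructor
          · intro hq; exact ⟨⟨q.1, hq⟩, rfl⟩
          · rintro ⟨a, rfl⟩; exact a.2
        have hconn : IsPreconnected (Subtype.val ⁻¹' (T i) : Set ↥K) := by
          rw [hsub]
          have : ConnectedSpace ↥(T i) := Subtype.connectedSpace (hTconn i)
          exact (isConnected_range (continuous_inclusion _)).isPreconnected
        have h1 : (⟨(i : X), hmemK i hit⟩ : ↥K) ∈ (Subtype.val ⁻¹' (T i) : Set ↥K) := by
          simp only [mem_preimage]; exact interior_subset (hTmem i)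
        have h2 : (⟨p, hp⟩ : ↥K) ∈ (Subtype.val ⁻¹' (T i) : Set ↥K) := hpi
        rw [ConnectedComponents.coe_eq_coe']
        exact hconn.subset_connectedComponent h2 h1
      exact Finite.of_surjective _ hsurj
  · intro hsl x y hxy
    have hd : 0 < dist x y := dist_pos.mpr hxy
    set V : Set X := Metric.ball y (dist x y / 2) with hVdef
    have hVn : V ∈ nhds y := Metric.ball_mem_nhds y (by linarith)
    obtain ⟨U, hUo, hyU, hUV, hfin⟩ := hsl y V hVn
    have hxcl : x ∉ closure U := by
      intro hx
      have : x ∈ Metric.closedBall y (dist x y / 2) :=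
        (Metric.closure_ball_subset_closedBall)
          ((closure_mono hUV).trans (closure_mono (le_refl V)) hx)
      rw [Metric.mem_closedBall] at this
      linarith
    have hxU : x ∈ Uᶜ := fun h => hxcl (subset_closure h)
    have hUcCl : IsClosed (Uᶜ) := hUo.isClosed_compl
    have : CompactSpace ↥(Uᶜ) := isCompact_iff_compactSpace.mp hUcCl.isCompact
    set p : ↥(Uᶜ) := ⟨x, hxU⟩ with hp
    set C : Set ↥(Uᶜ) := connectedComponent p with hC
    refine ⟨Subtype.val '' C, ?_, ?_, ?_, ?_⟩
    · exact (isClosed_connectedComponent.isCompact).image continuous_subtype_val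
    · exact (isConnected_connectedComponent).image _ continuous_subtype_val.continuousOn
    · have hCo : IsOpen C := isOpen_cc_of_finite p
      obtain ⟨W, hWo, hWC⟩ := isOpen_induced_iff.mp hCo
      rw [mem_interior]
      refine ⟨W ∩ (closure U)ᶜ, ?_, hWo.inter (isClosed_closure.isOpen_compl), ?_, hxcl⟩
      · rintro q ⟨hqW, hqcl⟩
        have hqU : q ∈ Uᶜ := fun h => hqcl (subset_closure h)
        exact ⟨⟨q, hqU⟩, by rw [← hWC]; exact hqW, rfl⟩
      · have : p ∈ C := mem_connectedComponent
        rw [← hWC] at this; exact this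
    · rintro ⟨⟨q, hq⟩, _, rfl⟩
      exact hq hyU
end

section
/- If a continuum X is colocally connected, then every point of X is a non-weak cut point; that is, X has no weak cut points. -/
/-- `p` is a weak cut point of the continuum `X` if there are two points distinct
from `p` (and from each other) such that every subcontinuum containing both of
them contains `p`. -/
def IsWeakCutPoint {X : Type*} [TopologicalSpace X] (p : X) : Prop :=
  ∃ x y : X, x ≠ p ∧ y ≠ p ∧ x ≠ y ∧
    ∀ C : Set X, IsCompact C → IsConnected C → x ∈ C → y ∈ C → p ∈ C

theorem colocallyConnected_no_weak_cut_points
    {X : Type*} [MetricSpace X] [CompactSpace X] [ConnectedSpace X] [Nonempty X]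
    (hX : ColocallyConnected X) : ∀ p : X, ¬ IsWeakCutPoint p := by
  rintro p ⟨x, y, hxp, hyp, hxy, hcut⟩
  have hV : ({x, y}ᶜ : Set X) ∈ nhds p := by
    apply IsOpen.mem_nhds
    · exact (Set.Finite.isClosed (Set.toFinite _)).isOpen_compl
    · simp [hxp.symm, hyp.symm]
  obtain ⟨U, hUopen, hpU, hUV, hUc⟩ := hX p _ hV
  have hx : x ∈ Uᶜ := fun h => (hUV h) (by simp)
  have hy : y ∈ Uᶜ := fun h => (hUV h) (by simp)
  have hcomp : IsCompact (Uᶜ : Set X) := hUopen.isClosed_compl.isCompact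
  exact hcut Uᶜ hcomp hUc hx hy hpU
end

section
/- Let (X, d) be a continuum and let μ : C(X) → [0, μ(X)] be a Whitney map. Then for each ε > 0 there exists δ > 0 such that if A, B ∈ C(X) satisfy B ⊆ N_d(A, δ) and |μ(A) − μ(B)| < δ, then the Hausdorff distance H_d(A, B) < ε. -/
open TopologicalSpace Metric Filter Set Topology

/-- The hyperspace of nonempty subcontinua of `X`, with the Hausdorff metric
inherited from `NonemptyCompacts X`. -/
abbrev SubC (X : Type*) [MetricSpace X] :=
  {K : NonemptyCompacts X // IsConnected (K : Set X)}

/-- A Whitney map on `C(X)`: continuous, zero on singletons, and strictly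
monotone with respect to proper inclusion. -/
def IsWhitneyMap {X : Type*} [MetricSpace X] (μ : SubC X → ℝ) : Prop :=
  Continuous μ ∧ (∀ (x : X) (K : SubC X), (K.1 : Set X) = {x} → μ K = 0) ∧
    ∀ A B : SubC X, (A.1 : Set X) ⊂ (B.1 : Set X) → μ A < μ B

/-- If the Hausdorff distance between two nonempty compacts is `< r`, each is contained
in the `r`-thickening of the other. -/
lemma subset_thickening_of_dist_lt {X : Type*} [MetricSpace X]
    {s t : NonemptyCompacts X} {r : ℝ} (h : dist s t < r) :
    (s : Set X) ⊆ thickening r (t : Set X) := by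
  intro x hx
  rw [NonemptyCompacts.dist_eq] at h
  have fin : EMetric.hausdorffEdist (s : Set X) (t : Set X) ≠ ⊤ :=
    Metric.hausdorffEdist_ne_top_of_nonempty_of_bounded s.nonempty t.nonempty
      s.isCompact.isBounded t.isCompact.isBounded
  obtain ⟨y, hy, hxy⟩ := Metric.exists_dist_lt_of_hausdorffDist_lt hx h fin
  exact Metric.mem_thickening_iff.2 ⟨y, hy, hxy⟩

/-- A Hausdorff limit of connected nonempty compacts is connected. -/
lemma isConnected_of_tendsto {X : Type*} [MetricSpace X]
    (K : ℕ → NonemptyCompacts X) (L : NonemptyCompacts X)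
    (hc : ∀ n, IsConnected ((K n : Set X)))
    (h : Tendsto K atTop (𝓝 L)) : IsConnected (L : Set X) := by
  refine ⟨L.nonempty, ?_⟩
  rw [isPreconnected_iff_subset_of_fully_disjoint_closed L.isCompact.isClosed]
  intro u v hu hv hcov hdisj
  by_contra hcontra
  push_neg at hcontra
  obtain ⟨hnu, hnv⟩ := hcontra
  -- the two pieces of L
  have hF1 : ((L : Set X) ∩ u).Nonempty := by
    by_contra hemp
    rw [Set.not_nonempty_iff_eq_empty] at hemp
    exact hnv fun x hx => ((hcov hx).resolve_left
      (fun hxu => Set.eq_empty_iff_forall_notMem.1 hemp x ⟨hx, hxu⟩))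
  have hF2 : ((L : Set X) ∩ v).Nonempty := by
    by_contra hemp
    rw [Set.not_nonempty_iff_eq_empty] at hemp
    exact hnu fun x hx => ((hcov hx).resolve_right
      (fun hxv => Set.eq_empty_iff_forall_notMem.1 hemp x ⟨hx, hxv⟩))
  have hdisj' : Disjoint ((L : Set X) ∩ u) ((L : Set X) ∩ v) :=
    hdisj.mono Set.inter_subset_right Set.inter_subset_right
  have hcomp1 : IsCompact ((L : Set X) ∩ u) := L.isCompact.inter_right hu
  have hclosed2 : IsClosed ((L : Set X) ∩ v) := (L.isCompact.isClosed).inter hv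
  obtain ⟨δ, hδ, hUV⟩ := hdisj'.exists_thickenings hcomp1 hclosed2
  -- choose n with dist (K n) L < δ
  obtain ⟨N, hN⟩ := (Metric.tendsto_atTop.1 h) δ hδ
  set n := N
  have hdist : dist (K n) L < δ := hN n le_rfl
  have hKL : (K n : Set X) ⊆ thickening δ (L : Set X) :=
    subset_thickening_of_dist_lt hdist
  have hLK : (L : Set X) ⊆ thickening δ ((K n : Set X)) :=
    subset_thickening_of_dist_lt (by rwa [dist_comm])
  -- K n is covered by the two disjoint open thickenings
  have hLeq : (L : Set X) = ((L : Set X) ∩ u) ∪ ((L : Set X) ∩ v) := by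
    rw [← Set.inter_union_distrib_left]
    exact (Set.inter_eq_left.2 hcov).symm
  have hcover : (K n : Set X) ⊆
      thickening δ ((L : Set X) ∩ u) ∪ thickening δ ((L : Set X) ∩ v) := by
    intro x hx
    have := hKL hx
    rw [hLeq, thickening_union] at this
    exact this
  -- K n meets both thickenings
  have hmeet : ∀ (F : Set X), F ⊆ (L : Set X) → F.Nonempty →
      ((K n : Set X) ∩ thickening δ F).Nonempty := by
    intro F hFL ⟨x, hxF⟩
    obtain ⟨y, hy, hxy⟩ := Metric.mem_thickening_iff.1 (hLK (hFL hxF))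
    exact ⟨y, hy, Metric.mem_thickening_iff.2 ⟨x, hxF, by rwa [dist_comm]⟩⟩
  have hm1 := hmeet _ Set.inter_subset_left hF1
  have hm2 := hmeet _ Set.inter_subset_left hF2
  rcases (hc n).isPreconnected.subset_or_subset isOpen_thickening isOpen_thickening
      hUV hcover with hsub | hsub
  · obtain ⟨y, hyK, hyV⟩ := hm2
    exact (hUV.ne_of_mem (hsub hyK) hyV) rfl
  · obtain ⟨y, hyK, hyU⟩ := hm1
    exact (hUV.ne_of_mem hyU (hsub hyK)) rfl

theorem whitney_map_uniform_estimate
    {X : Type*} [MetricSpace X] [CompactSpace X] [ConnectedSpace X] [Nonempty X]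
    (μ : SubC X → ℝ) (hμ : IsWhitneyMap μ) :
    ∀ ε > (0 : ℝ), ∃ δ > (0 : ℝ), ∀ A B : SubC X,
      (B.1 : Set X) ⊆ Metric.thickening δ (A.1 : Set X) →
      |μ A - μ B| < δ → dist A B < ε := by
  intro ε hε
  by_contra hcon
  push_neg at hcon
  have hall : ∀ n : ℕ, ∃ A B : SubC X,
      (B.1 : Set X) ⊆ Metric.thickening (1 / (n + 1) : ℝ) (A.1 : Set X) ∧
      |μ A - μ B| < 1 / (n + 1) ∧ ε ≤ dist A B := by
    intro n
    obtain ⟨A, B, h1, h2, h3⟩ := hcon (1 / (n + 1)) (by positivity)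
    exact ⟨A, B, h1, h2, h3⟩
  choose A B h1 h2 h3 using hall
  -- extract convergent subsequences of the underlying compacts
  obtain ⟨K, φ, hφ, hKt⟩ := CompactSpace.tendsto_subseq (fun n => (A n).1)
  obtain ⟨L, ψ, hψ, hLt⟩ := CompactSpace.tendsto_subseq (fun n => (B (φ n)).1)
  set σ : ℕ → ℕ := φ ∘ ψ with hσdef
  have hσ : StrictMono σ := hφ.comp hψ
  have hKt' : Tendsto (fun n => (A (σ n)).1) atTop (𝓝 K) := by
    have := hKt.comp hψ.tendsto_atTop
    exact this
  have hLt' : Tendsto (fun n => (B (σ n)).1) atTop (𝓝 L) := hLt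
  -- limits are connected
  have hKc : IsConnected (K : Set X) :=
    isConnected_of_tendsto _ K (fun n => (A (σ n)).2) hKt'
  have hLc : IsConnected (L : Set X) :=
    isConnected_of_tendsto _ L (fun n => (B (σ n)).2) hLt'
  set AK : SubC X := ⟨K, hKc⟩
  set BL : SubC X := ⟨L, hLc⟩
  -- convergence in SubC
  have hKtS : Tendsto (fun n => A (σ n)) atTop (𝓝 AK) := tendsto_subtype_rng.2 hKt'
  have hLtS : Tendsto (fun n => B (σ n)) atTop (𝓝 BL) := tendsto_subtype_rng.2 hLt'
  -- the auxiliary sequence 1/(σ n + 1) tends to 0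
  have hσle : ∀ n, (1 : ℝ) / (σ n + 1) ≤ 1 / (n + 1) := by
    intro n
    apply one_div_le_one_div_of_le (by positivity)
    have : n ≤ σ n := hσ.le_apply
    push_cast
    linarith [(Nat.cast_le (α := ℝ)).2 this]
  have hc0 : Tendsto (fun n : ℕ => (1 : ℝ) / (σ n + 1)) atTop (𝓝 0) :=
    squeeze_zero (fun n => by positivity) hσle tendsto_one_div_add_atTop_nhds_zero_nat
  -- L ⊆ K
  have hLsubK : (L : Set X) ⊆ (K : Set X) := by
    intro x hx
    have hxcl : x ∈ closure (K : Set X) := by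
      rw [Metric.mem_closure_iff]
      intro η hη
      obtain ⟨N1, hN1⟩ := (Metric.tendsto_atTop.1 hLt') (η / 3) (by positivity)
      obtain ⟨N2, hN2⟩ := (Metric.tendsto_atTop.1 hKt') (η / 3) (by positivity)
      obtain ⟨N3, hN3⟩ := (Metric.tendsto_atTop.1 hc0) (η / 3) (by positivity)
      set n := max N1 (max N2 N3)
      have hd1 : dist (B (σ n)).1 L < η / 3 := hN1 n (le_max_left _ _)
      have hd2 : dist (A (σ n)).1 K < η / 3 :=
        hN2 n ((le_max_left _ _).trans (le_max_right _ _))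
      have hd3 : (1 : ℝ) / (σ n + 1) < η / 3 := by
        have := hN3 n ((le_max_right _ _).trans (le_max_right _ _))
        rwa [Real.dist_eq, sub_zero, abs_of_pos (by positivity)] at this
      -- x ∈ L ⊆ thick (B σn) ⊆ thick thick (A σn) ⊆ thick thick thick K
      have hx1 : x ∈ thickening (η / 3) ((B (σ n)).1 : Set X) :=
        subset_thickening_of_dist_lt (by rwa [dist_comm]) hx
      obtain ⟨b, hb, hxb⟩ := Metric.mem_thickening_iff.1 hx1
      have hb1 : b ∈ thickening ((1 : ℝ) / (σ n + 1)) ((A (σ n)).1 : Set X) :=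
        h1 (σ n) hb
      obtain ⟨a, ha, hba⟩ := Metric.mem_thickening_iff.1 hb1
      have ha1 : a ∈ thickening (η / 3) (K : Set X) :=
        subset_thickening_of_dist_lt hd2 ha
      obtain ⟨y, hy, hay⟩ := Metric.mem_thickening_iff.1 ha1
      refine ⟨y, hy, ?_⟩
      calc dist x y ≤ dist x b + dist b a + dist a y := dist_triangle4 x b a y
        _ < η / 3 + η / 3 + η / 3 := by
            have : dist b a < η / 3 := lt_trans hba hd3
            linarith
        _ = η := by ring
    rwa [K.isCompact.isClosed.closure_eq] at hxcl
  -- μ AK = μ BL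
  have hμK : Tendsto (fun n => μ (A (σ n))) atTop (𝓝 (μ AK)) := (hμ.1.tendsto AK).comp hKtS
  have hμL : Tendsto (fun n => μ (B (σ n))) atTop (𝓝 (μ BL)) := (hμ.1.tendsto BL).comp hLtS
  have hμeq : μ AK = μ BL := by
    have habs : Tendsto (fun n => |μ (A (σ n)) - μ (B (σ n))|) atTop (𝓝 (|μ AK - μ BL|)) :=
      ((hμK.sub hμL).abs)
    have hle : |μ AK - μ BL| ≤ 0 :=
      le_of_tendsto_of_tendsto' habs hc0 fun n => le_of_lt (h2 (σ n))
    have := abs_nonneg (μ AK - μ BL)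
    have h0 : |μ AK - μ BL| = 0 := le_antisymm hle this
    have := abs_eq_zero.1 h0
    linarith [sub_eq_zero.1 this]
  -- conclude L = K
  have hLK : (L : Set X) = (K : Set X) := by
    by_contra hne
    have hss : (L : Set X) ⊂ (K : Set X) := ⟨hLsubK, fun h => hne (le_antisymm hLsubK h)⟩
    exact absurd hμeq (ne_of_lt (hμ.2.2 BL AK hss)).symm
  have hABeq : AK = BL := Subtype.ext (NonemptyCompacts.ext hLK.symm)
  -- but dist AK BL ≥ ε
  have hdist : Tendsto (fun n => dist (A (σ n)) (B (σ n))) atTop (𝓝 (dist AK BL)) :=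
    hKtS.dist hLtS
  have hεle : ε ≤ dist AK BL :=
    le_of_tendsto_of_tendsto' tendsto_const_nhds hdist fun n => h3 (σ n)
  rw [hABeq, dist_self] at hεle
  exact absurd hεle (not_le.2 hε)
end

section
/- For any Whitney map μ on the hyperspace C(X) of a continuum X and any t ∈ [0, μ(X)], the Whitney level μ⁻¹(t) is a continuum (nonempty, compact, and connected). -/
/-!
Continuity of `μ` makes the level closed in the compact hyperspace, hence compact. An order arc
(a maximal chain of subcontinua) from `{x}` to `X` meets the level by the intermediate value
theorem, so through every point of `X` passes a member of the level.

For connectedness, suppose the level splits into two closed pieces `𝒜` and `ℬ`. The unions of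
their members are closed and cover the connected space `X`, so some point `x` lies in a member
`P` of `𝒜` and in a member `Q` of `ℬ`. Along order arcs `K` from `{x}` to `P` and `L` from `{x}`
to `Q`, the pairs with `μ (K ∪ L) = t` form a connected set: its projection is the whole arc of
`K`'s and its fibres are subarcs. Its image under `(K, L) ↦ K ∪ L` is then a connected subset of
the level containing `P` and `Q`, a contradiction.

Order arcs are connected because a Whitney map embeds them into `ℝ` onto intervals: a maximal
chain of subcontinua has no gaps, since by the boundary bumping theorem there is a subcontinuum
strictly between any two nested distinct ones.
-/

open TopologicalSpace

/-- The whole continuum `X` as an element of its hyperspace of subcontinua. -/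
def wholeC (X : Type*) [MetricSpace X] [CompactSpace X] [ConnectedSpace X] [Nonempty X] :
    SubC X :=
  ⟨⟨⟨Set.univ, isCompact_univ⟩, Set.univ_nonempty⟩, isConnected_univ⟩

open Set Topology

theorem IsChain.ordConnected_image_of_strictMonoOn {α : Type*} [TopologicalSpace α]
    [PartialOrder α] {s : Set α} (hs : IsCompact s) (hchain : IsChain (· ≤ ·) s)
    [DenselyOrdered s] {f : α → ℝ} (hf : ContinuousOn f s) (hmono : StrictMonoOn f s) :
    (f '' s).OrdConnected := by
  refine ⟨?_⟩
  rintro _ ⟨a, ha, rfl⟩ _ ⟨b, hb, rfl⟩ c ⟨hac, hcb⟩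
  by_contra hc
  -- The values of `f` nearest to `c` from below and from above are taken at two members with
  -- no member in between.
  have himage : IsCompact (f '' s) := hs.image_of_continuousOn hf
  obtain ⟨_, ⟨⟨K, hK, rfl⟩, hKc⟩, hKmax⟩ :=
    (himage.inter_right isClosed_Iic).exists_isGreatest ⟨f a, mem_image_of_mem f ha, hac⟩
  obtain ⟨_, ⟨⟨L, hL, rfl⟩, hLc⟩, hLmin⟩ :=
    (himage.inter_right isClosed_Ici).exists_isLeast ⟨f b, mem_image_of_mem f hb, hcb⟩
  have hfK : f K < c := lt_of_le_of_ne hKc fun h => hc (h ▸ mem_image_of_mem f hK)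
  have hfL : c < f L := lt_of_le_of_ne hLc fun h => hc (h ▸ mem_image_of_mem f hL)
  have hKL : K < L := by
    refine lt_of_le_of_ne ((hchain.total hK hL).resolve_right fun h => ?_) ?_
    · exact (hmono.monotoneOn hL hK h).not_gt (hfK.trans hfL)
    · rintro rfl; exact hfK.not_gt hfL
  obtain ⟨⟨M, hM⟩, hKM, hML⟩ := exists_between (show (⟨K, hK⟩ : s) < ⟨L, hL⟩ from hKL)
  rcases le_total (f M) c with h | h
  · exact (hmono hK hM hKM).not_ge (hKmax ⟨mem_image_of_mem f hM, h⟩)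
  · exact (hmono hM hL hML).not_ge (hLmin ⟨mem_image_of_mem f hM, h⟩)

theorem IsChain.isPreconnected_of_strictMonoOn {α : Type*} [TopologicalSpace α] [PartialOrder α]
    {s : Set α} (hs : IsCompact s) (hchain : IsChain (· ≤ ·) s) [DenselyOrdered s]
    {f : α → ℝ} (hf : ContinuousOn f s) (hmono : StrictMonoOn f s) : IsPreconnected s := by
  have : CompactSpace s := isCompact_iff_compactSpace.mp hs
  have hinj : InjOn f s := fun K hK L hL hKL => by
    by_contra hne
    rcases hchain.total hK hL with h | h
    · exact (hmono hK hL (h.lt_of_ne hne)).ne hKL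
    · exact (hmono hL hK (h.lt_of_ne (Ne.symm hne))).ne hKL.symm
  have hemb : IsClosedEmbedding (s.domRestrict f) :=
    hf.domRestrict.isClosedEmbedding hinj.injective
  rw [isPreconnected_iff_preconnectedSpace, preconnectedSpace_iff_univ,
    ← hemb.isInducing.isPreconnected_image, image_univ, range_domRestrict]
  exact (hchain.ordConnected_image_of_strictMonoOn hs hf hmono).isPreconnected

theorem IsCompact.isPreconnected_of_isPreconnected_fibers {α β : Type*} [TopologicalSpace α]
    [T2Space α] [TopologicalSpace β] {S : Set (α × β)} (hS : IsCompact S)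
    (hbase : IsPreconnected (Prod.fst '' S)) (hfib : ∀ a, IsPreconnected {b | (a, b) ∈ S}) :
    IsPreconnected S := by
  refine isPreconnected_closed_iff.mpr fun u v hu hv hcover ⟨p, hpS, hpu⟩ ⟨q, hqS, hqv⟩ => ?_
  have hproj : ∀ {w : Set (α × β)}, IsClosed w → IsClosed (Prod.fst '' (S ∩ w)) := fun hw =>
    ((hS.inter_right hw).image continuous_fst).isClosed
  obtain ⟨a, -, ⟨⟨a, b₁⟩, ⟨hb₁S, hb₁u⟩, rfl⟩, ⟨⟨a, b₂⟩, ⟨hb₂S, hb₂v⟩, rfl⟩⟩ :=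
    isPreconnected_closed_iff.mp hbase _ _ (hproj hu) (hproj hv)
      (by
        rintro _ ⟨r, hrS, rfl⟩
        exact (hcover hrS).imp (fun h => ⟨r, ⟨hrS, h⟩, rfl⟩) fun h => ⟨r, ⟨hrS, h⟩, rfl⟩)
      ⟨p.1, mem_image_of_mem _ hpS, p, ⟨hpS, hpu⟩, rfl⟩
      ⟨q.1, mem_image_of_mem _ hqS, q, ⟨hqS, hqv⟩, rfl⟩
  obtain ⟨b, hbS, hbu, hbv⟩ := isPreconnected_closed_iff.mp (hfib a) _ _
    (hu.preimage (Continuous.prodMk_right a)) (hv.preimage (Continuous.prodMk_right a))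
    (fun b hb => hcover hb) ⟨b₁, hb₁S, hb₁u⟩ ⟨b₂, hb₂S, hb₂v⟩
  exact ⟨_, hbS, hbu, hbv⟩

theorem exists_isClopen_mem_disjoint_of_disjoint_connectedComponent {X : Type*}
    [TopologicalSpace X] [T2Space X] [CompactSpace X] {F : Set X} (hF : IsClosed F) {x : X}
    (h : Disjoint F (connectedComponent x)) : ∃ W, IsClopen W ∧ x ∈ W ∧ Disjoint F W := by
  rw [connectedComponent_eq_iInter_isClopen, disjoint_iff_inter_eq_empty] at h
  have : Nonempty { s : Set X // IsClopen s ∧ x ∈ s } := ⟨⟨univ, isClopen_univ, mem_univ x⟩⟩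
  obtain ⟨⟨W, hW, hxW⟩, hFW⟩ := hF.isCompact.elim_directed_family_closed _
    (fun s => s.2.1.isClosed) h
    fun s t => ⟨⟨s ∩ t, s.2.1.inter t.2.1, s.2.2, t.2.2⟩, inter_subset_left, inter_subset_right⟩
  exact ⟨W, hW, hxW, disjoint_iff_inter_eq_empty.mpr hFW⟩

theorem IsPreconnected.exists_mem_connectedComponentIn_eq {X : Type*} [TopologicalSpace X]
    [T2Space X] {B : Set X} (hB : IsPreconnected B) (hBc : IsCompact B) {f : X → ℝ}
    (hf : Continuous f) {ε : ℝ} {x y : X} (hx : x ∈ B) (hxε : f x ≤ ε) (hy : y ∈ B)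
    (hyε : ε < f y) : ∃ z ∈ _root_.connectedComponentIn (B ∩ f ⁻¹' Iic ε) x, f z = ε := by
  set N := B ∩ f ⁻¹' Iic ε
  have hxN : x ∈ N := ⟨hx, hxε⟩
  by_contra! hne
  have : CompactSpace N :=
    isCompact_iff_compactSpace.mp (hBc.inter_right (isClosed_Iic.preimage hf))
  obtain ⟨W, hW, hxW, hFW⟩ := exists_isClopen_mem_disjoint_of_disjoint_connectedComponent
    (isClosed_le continuous_const (hf.comp continuous_subtype_val) : IsClosed {z : N | ε ≤ f z})
    (x := ⟨x, hxN⟩) <| disjoint_left.mpr fun z hεz hz => by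
      have hzN : (z : X) ∈ _root_.connectedComponentIn N x := by
        rw [connectedComponentIn_eq_image hxN]; exact mem_image_of_mem _ hz
      exact hne z hzN (le_antisymm z.2.2 hεz)
  obtain ⟨O, hO, hOW⟩ := isOpen_induced_iff.mp hW.isOpen
  -- `W` is both closed in `X` and relatively open in `B`, so it splits `B`.
  have hWcl : IsClosed (Subtype.val '' W) :=
    (hW.isClosed.isCompact.image continuous_subtype_val).isClosed
  have hcover : B ⊆ (O ∩ f ⁻¹' Iio ε) ∪ (Subtype.val '' W)ᶜ := by
    intro b hb
    by_cases hbW : b ∈ Subtype.val '' W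
    · obtain ⟨z, hzW, rfl⟩ := hbW
      refine Or.inl ⟨?_, show f z < ε from not_le.mp fun h => disjoint_left.mp hFW h hzW⟩
      rwa [← hOW] at hzW
    · exact Or.inr hbW
  have hdisj : B ∩ ((O ∩ f ⁻¹' Iio ε) ∩ (Subtype.val '' W)ᶜ) = ∅ := by
    refine eq_empty_of_forall_notMem fun b ⟨hb, ⟨hbO, hbε⟩, hbW⟩ => hbW ?_
    refine ⟨⟨b, hb, show f b ≤ ε from le_of_lt hbε⟩, ?_, rfl⟩
    rwa [← hOW]
  rcases isPreconnected_iff_subset_of_disjoint.mp hB _ _ (hO.inter (isOpen_Iio.preimage hf))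
    hWcl.isOpen_compl hcover hdisj with h | h
  · exact (h hy).2.not_gt hyε
  · exact h hx ⟨⟨x, hxN⟩, hxW, rfl⟩

namespace TopologicalSpace.NonemptyCompacts

section T2

variable {X : Type*} [TopologicalSpace X] [T2Space X]

instance : OrderClosedTopology (NonemptyCompacts X) where
  isClosed_le' := by
    simp_rw [← sup_eq_right]
    exact isClosed_eq continuous_sup continuous_snd

theorem isClosed_setOf_isPreconnected :
    IsClosed {K : NonemptyCompacts X | IsPreconnected (K : Set X)} := by
  refine isOpen_compl_iff.mp <| isOpen_iff_forall_mem_open.mpr fun K hK => ?_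
  simp only [mem_compl_iff, mem_ofPred_eq,
    isPreconnected_iff_subset_of_fully_disjoint_closed K.isCompact.isClosed] at hK
  push Not at hK
  obtain ⟨u, v, hu, hv, hKuv, huv, hKu, hKv⟩ := hK
  obtain ⟨U, V, hU, hV, huU, hvV, hUV⟩ := SeparatedNhds.of_isCompact_isCompact
    (K.isCompact.inter_right hu) (K.isCompact.inter_right hv)
    (huv.mono inter_subset_right inter_subset_right)
  have hKUV : (K : Set X) ⊆ U ∪ V := fun x hx =>
    (hKuv hx).imp (fun h => huU ⟨hx, h⟩) fun h => hvV ⟨hx, h⟩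
  obtain ⟨a, haK, hav⟩ := not_subset.mp hKv
  obtain ⟨b, hbK, hbu⟩ := not_subset.mp hKu
  refine ⟨{D | (D : Set X) ⊆ U ∪ V} ∩ {D | ((D : Set X) ∩ U).Nonempty} ∩
      {D | ((D : Set X) ∩ V).Nonempty}, ?_, ?_, ?_⟩
  · rintro D ⟨⟨hDUV, hDU⟩, hDV⟩ hD
    obtain ⟨x, -, hxU, hxV⟩ := hD U V hU hV hDUV hDU hDV
    exact disjoint_left.mp hUV hxU hxV
  · exact ((isOpen_subsets_of_isOpen (hU.union hV)).inter
      (isOpen_inter_nonempty_of_isOpen hU)).inter (isOpen_inter_nonempty_of_isOpen hV)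
  · exact ⟨⟨hKUV, a, haK, huU ⟨haK, (hKuv haK).resolve_right hav⟩⟩,
      b, hbK, hvV ⟨hbK, (hKuv hbK).resolve_left hbu⟩⟩

theorem isClosed_setOf_isConnected :
    IsClosed {K : NonemptyCompacts X | IsConnected (K : Set X)} := by
  simpa only [IsConnected, NonemptyCompacts.nonempty, true_and] using isClosed_setOf_isPreconnected

end T2

section OrderArc

variable {X : Type*} [TopologicalSpace X]

/-- An order arc from `A` to `B` in `C(X)`, described order-theoretically rather than as an arc. -/
structure IsOrderArc (𝒞 : Set (NonemptyCompacts X)) (A B : NonemptyCompacts X) : Prop where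
  left_mem : A ∈ 𝒞
  right_mem : B ∈ 𝒞
  isConnected : ∀ K ∈ 𝒞, IsConnected (K : Set X)
  subset_Icc : 𝒞 ⊆ Icc A B
  isChain : IsChain (· ≤ ·) 𝒞
  isClosed : IsClosed 𝒞
  denselyOrdered : DenselyOrdered 𝒞

variable {𝒞 : Set (NonemptyCompacts X)} {A B : NonemptyCompacts X}

theorem isConnected_coe_singleton (x : X) : IsConnected (({x} : NonemptyCompacts X) : Set X) := by
  rw [coe_singleton]
  exact isConnected_singleton

theorem IsOrderArc.isPreconnected [CompactSpace X] (h : IsOrderArc 𝒞 A B)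
    {ν : NonemptyCompacts X → ℝ} (hν : Continuous ν)
    (hmono : StrictMonoOn ν {K | IsConnected (K : Set X)}) : IsPreconnected 𝒞 :=
  have := h.denselyOrdered
  h.isChain.isPreconnected_of_strictMonoOn h.isClosed.isCompact hν.continuousOn
    (hmono.mono h.isConnected)

theorem IsOrderArc.isPreconnected_setOf_eq [CompactSpace X] (h : IsOrderArc 𝒞 A B)
    {ν : NonemptyCompacts X → ℝ} (hν : Continuous ν)
    (hmono : StrictMonoOn ν {K | IsConnected (K : Set X)}) {g : NonemptyCompacts X → ℝ}
    (hg : Continuous g) (hgm : MonotoneOn g 𝒞) (t : ℝ) : IsPreconnected {K ∈ 𝒞 | g K = t} := by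
  have : DenselyOrdered {K ∈ 𝒞 | g K = t} := by
    refine ⟨fun ⟨K, hK, hKt⟩ ⟨L, hL, hLt⟩ hKL => ?_⟩
    have := h.denselyOrdered
    obtain ⟨⟨M, hM⟩, hKM, hML⟩ := exists_between (show (⟨K, hK⟩ : 𝒞) < ⟨L, hL⟩ from hKL)
    exact ⟨⟨M, hM, le_antisymm (hLt ▸ hgm hM hL hML.le) (hKt ▸ hgm hK hM hKM.le)⟩, hKM, hML⟩
  exact (h.isChain.mono (sep_subset _ _)).isPreconnected_of_strictMonoOn
    (h.isClosed.inter (isClosed_eq hg continuous_const)).isCompact hν.continuousOn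
    (hmono.mono fun K hK => h.isConnected K hK.1)

theorem IsOrderArc.isConnected_sup {x : X} {P Q : NonemptyCompacts X}
    {𝒞₁ 𝒞₂ : Set (NonemptyCompacts X)} (h₁ : IsOrderArc 𝒞₁ {x} P) (h₂ : IsOrderArc 𝒞₂ {x} Q)
    {K L : NonemptyCompacts X} (hK : K ∈ 𝒞₁) (hL : L ∈ 𝒞₂) :
    IsConnected ((K ⊔ L : NonemptyCompacts X) : Set X) := by
  rw [coe_sup]
  exact (h₁.isConnected K hK).union ⟨x, (h₁.subset_Icc hK).1 rfl, (h₂.subset_Icc hL).1 rfl⟩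
    (h₂.isConnected L hL)

theorem IsOrderArc.isPreconnected_setOf_sup_eq [T2Space X] [CompactSpace X] {x : X}
    {P Q : NonemptyCompacts X} {𝒞₁ 𝒞₂ : Set (NonemptyCompacts X)} (h₁ : IsOrderArc 𝒞₁ {x} P)
    (h₂ : IsOrderArc 𝒞₂ {x} Q) {ν : NonemptyCompacts X → ℝ} (hν : Continuous ν)
    (hmono : StrictMonoOn ν {K | IsConnected (K : Set X)}) {t : ℝ} (hPt : ν P ≤ t)
    (hQt : t ≤ ν Q) : IsPreconnected {p ∈ 𝒞₁ ×ˢ 𝒞₂ | ν (p.1 ⊔ p.2) = t} := by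
  have hslice (K : NonemptyCompacts X) : Continuous fun L => ν (K ⊔ L) :=
    hν.comp (continuous_const.sup continuous_id)
  have hfst : Prod.fst '' {p ∈ 𝒞₁ ×ˢ 𝒞₂ | ν (p.1 ⊔ p.2) = t} = 𝒞₁ := by
    refine subset_antisymm (fun _ ⟨p, hp, hpK⟩ => hpK ▸ hp.1.1) fun K hK => ?_
    have hlow : ν (K ⊔ {x}) ≤ t := by
      rw [sup_eq_left.mpr (h₁.subset_Icc hK).1]
      exact (hmono.monotoneOn (h₁.isConnected K hK) (h₁.isConnected P h₁.right_mem)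
        (h₁.subset_Icc hK).2).trans hPt
    have hhigh : t ≤ ν (K ⊔ Q) := hQt.trans <| hmono.monotoneOn (h₂.isConnected Q h₂.right_mem)
      (h₁.isConnected_sup h₂ hK h₂.right_mem) le_sup_right
    obtain ⟨L, hL, hLt⟩ := (h₂.isPreconnected hν hmono).intermediate_value h₂.left_mem
      h₂.right_mem (hslice K).continuousOn ⟨hlow, hhigh⟩
    exact ⟨(K, L), ⟨⟨hK, hL⟩, hLt⟩, rfl⟩
  refine IsCompact.isPreconnected_of_isPreconnected_fibers ?_
    (by rw [hfst]; exact h₁.isPreconnected hν hmono) fun K => ?_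
  · exact ((h₁.isClosed.prod h₂.isClosed).inter
      (isClosed_eq (hν.comp continuous_sup) continuous_const)).isCompact
  by_cases hK : K ∈ 𝒞₁
  · convert h₂.isPreconnected_setOf_eq hν hmono (hslice K) (fun L hL L' hL' hLL' =>
      hmono.monotoneOn (h₁.isConnected_sup h₂ hK hL) (h₁.isConnected_sup h₂ hK hL')
        (sup_le_sup_left hLL' K)) t using 1
    ext L
    simp [hK]
  · convert isPreconnected_empty
    exact eq_empty_of_forall_notMem fun L hL => hK hL.1.1

end OrderArc

section Metric

variable {X : Type*} [MetricSpace X]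

theorem exists_isConnected_lt_lt {A B : NonemptyCompacts X} (hA : IsConnected (A : Set X))
    (hB : IsConnected (B : Set X)) (hAB : A < B) :
    ∃ L : NonemptyCompacts X, IsConnected (L : Set X) ∧ A < L ∧ L < B := by
  set f : X → ℝ := fun y => Metric.infDist y A
  have hf : Continuous f := Metric.continuous_infDist_pt _
  obtain ⟨b, hbB, hbA⟩ := SetLike.exists_of_lt hAB
  obtain ⟨y, hyB, hymax⟩ := B.isCompact.exists_isMaxOn B.nonempty hf.continuousOn
  have hpos : 0 < f y :=
    ((A.isCompact.isClosed.notMem_iff_infDist_pos A.nonempty).mp hbA).trans_le (hymax hbB)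
  set N := (B : Set X) ∩ f ⁻¹' Iic (f y / 2)
  obtain ⟨x, hxA⟩ := A.nonempty
  have hAN : (A : Set X) ⊆ N := fun a ha =>
    ⟨hAB.le ha, by simp only [mem_preimage, mem_Iic, f, Metric.infDist_zero_of_mem ha]; positivity⟩
  obtain ⟨z, hz, hzε⟩ := hB.isPreconnected.exists_mem_connectedComponentIn_eq B.isCompact hf
    (hAN hxA).1 (hAN hxA).2 hyB (half_lt_self hpos)
  set L := connectedComponentIn N x
  have hLN : L ⊆ N := connectedComponentIn_subset _ x
  have hLcl : IsClosed L := isClosed_of_closure_subset <|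
    isPreconnected_connectedComponentIn.closure.subset_connectedComponentIn
      (subset_closure (mem_connectedComponentIn (hAN hxA)))
      (closure_minimal hLN (B.isCompact.isClosed.inter (isClosed_Iic.preimage hf)))
  refine ⟨⟨⟨L, B.isCompact.of_isClosed_subset hLcl (hLN.trans inter_subset_left)⟩,
    x, mem_connectedComponentIn (hAN hxA)⟩, isConnected_connectedComponentIn_iff.mpr (hAN hxA),
    SetLike.lt_iff_le_and_exists.mpr ⟨?_, z, hz, fun hzA => ?_⟩,
    SetLike.lt_iff_le_and_exists.mpr ⟨hLN.trans inter_subset_left, y, hyB, fun hyL => ?_⟩⟩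
  · exact hA.isPreconnected.subset_connectedComponentIn hxA hAN
  · simp only [f, Metric.infDist_zero_of_mem hzA] at hzε
    linarith
  · have : f y ≤ f y / 2 := (hLN hyL).2
    linarith

theorem exists_isOrderArc {A B : NonemptyCompacts X} (hA : IsConnected (A : Set X))
    (hB : IsConnected (B : Set X)) (hAB : A ≤ B) : ∃ 𝒞, IsOrderArc 𝒞 A B := by
  set Ω := {K : NonemptyCompacts X | IsConnected (K : Set X)} ∩ Icc A B
  obtain ⟨s, hs⟩ := (IsChain.pair (show (⟨A, hA, le_rfl, hAB⟩ : Ω) ≤ ⟨B, hB, hAB, le_rfl⟩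
    from hAB)).exists_subset_flag
  set 𝒞 := Subtype.val '' (s : Set Ω)
  have hchain : IsChain (· ≤ ·) 𝒞 := by
    rintro _ ⟨K, hK, rfl⟩ _ ⟨L, hL, rfl⟩ hne
    exact s.Chain' hK hL (ne_of_apply_ne _ hne)
  have mem_of_comparable : ∀ C ∈ Ω, (∀ K ∈ 𝒞, C ≤ K ∨ K ≤ C) → C ∈ 𝒞 := fun C hC hcomp =>
    ⟨⟨C, hC⟩, s.mem_iff_forall_le_or_ge.mpr fun K hK => hcomp K ⟨K, hK, rfl⟩, rfl⟩
  have h𝒞Ω : 𝒞 ⊆ Ω := by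
    rintro _ ⟨K, -, rfl⟩
    exact K.2
  refine ⟨𝒞, ⟨_, hs (mem_insert _ _), rfl⟩, ⟨_, hs (mem_insert_of_mem _ rfl), rfl⟩,
    fun K hK => (h𝒞Ω hK).1, fun K hK => (h𝒞Ω hK).2, hchain, ?_, ?_⟩
  · refine isClosed_of_closure_subset fun C hC => mem_of_comparable C ?_ fun K hK => ?_
    · exact closure_minimal h𝒞Ω (isClosed_setOf_isConnected.inter isClosed_Icc) hC
    · exact closure_minimal (fun D hD => hchain.total hD hK) (isClosed_Iic.union isClosed_Ici) hC
  · refine ⟨fun ⟨K, hK⟩ ⟨L, hL⟩ hKL => ?_⟩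
    by_contra hgap
    obtain ⟨M, hM, hKM, hML⟩ := exists_isConnected_lt_lt (h𝒞Ω hK).1 (h𝒞Ω hL).1 hKL
    refine hgap ⟨⟨M, mem_of_comparable M ⟨hM, (h𝒞Ω hK).2.1.trans hKM.le,
      hML.le.trans (h𝒞Ω hL).2.2⟩ fun E hE => ?_⟩, hKM, hML⟩
    by_cases hEK : E ≤ K
    · exact Or.inr (hEK.trans hKM.le)
    by_cases hLE : L ≤ E
    · exact Or.inl (hML.le.trans hLE)
    exact (hgap ⟨⟨E, hE⟩, lt_of_le_not_ge ((hchain.total hK hE).resolve_right hEK) hEK,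
      lt_of_le_not_ge ((hchain.total hE hL).resolve_right hLE) hLE⟩).elim

end Metric

section Level

variable {X : Type*} [MetricSpace X] [CompactSpace X] {ν : NonemptyCompacts X → ℝ}

theorem exists_isConnected_mem_Icc_eq (hν : Continuous ν)
    (hmono : StrictMonoOn ν {K | IsConnected (K : Set X)}) {A B : NonemptyCompacts X}
    (hA : IsConnected (A : Set X)) (hB : IsConnected (B : Set X)) (hAB : A ≤ B) {t : ℝ}
    (ht : t ∈ Icc (ν A) (ν B)) :
    ∃ K : NonemptyCompacts X, IsConnected (K : Set X) ∧ K ∈ Icc A B ∧ ν K = t := by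
  obtain ⟨𝒞, h𝒞⟩ := exists_isOrderArc hA hB hAB
  obtain ⟨K, hK, hKt⟩ := (h𝒞.isPreconnected hν hmono).intermediate_value h𝒞.left_mem
    h𝒞.right_mem hν.continuousOn ht
  exact ⟨K, h𝒞.isConnected K hK, h𝒞.subset_Icc hK, hKt⟩

theorem exists_isPreconnected_subset_level (hν : Continuous ν)
    (hmono : StrictMonoOn ν {K | IsConnected (K : Set X)}) {P Q : NonemptyCompacts X}
    (hP : IsConnected (P : Set X)) (hQ : IsConnected (Q : Set X)) {x : X} (hxP : x ∈ P)
    (hxQ : x ∈ Q) {t : ℝ} (hPt : ν P = t) (hQt : ν Q = t) :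
    ∃ 𝒢 ⊆ {K : NonemptyCompacts X | IsConnected (K : Set X) ∧ ν K = t},
      IsPreconnected 𝒢 ∧ P ∈ 𝒢 ∧ Q ∈ 𝒢 := by
  obtain ⟨𝒞₁, h₁⟩ := exists_isOrderArc (isConnected_coe_singleton x) hP
    (singleton_subset_iff.mpr hxP)
  obtain ⟨𝒞₂, h₂⟩ := exists_isOrderArc (isConnected_coe_singleton x) hQ
    (singleton_subset_iff.mpr hxQ)
  have hPx : P ⊔ {x} = P := sup_eq_left.mpr (singleton_subset_iff.mpr hxP)
  have hxQ : {x} ⊔ Q = Q := sup_eq_right.mpr (singleton_subset_iff.mpr hxQ)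
  refine ⟨(fun p => p.1 ⊔ p.2) '' {p ∈ 𝒞₁ ×ˢ 𝒞₂ | ν (p.1 ⊔ p.2) = t}, ?_,
    (h₁.isPreconnected_setOf_sup_eq h₂ hν hmono hPt.le hQt.ge).image _
      continuous_sup.continuousOn,
    ⟨(P, {x}), ⟨⟨h₁.right_mem, h₂.left_mem⟩, by simpa [hPx]⟩, hPx⟩,
    ⟨({x}, Q), ⟨⟨h₁.left_mem, h₂.right_mem⟩, by simpa [hxQ]⟩, hxQ⟩⟩
  rintro _ ⟨p, ⟨⟨hp₁, hp₂⟩, hpt⟩, rfl⟩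
  exact ⟨h₁.isConnected_sup h₂ hp₁ hp₂, hpt⟩

theorem isPreconnected_level [ConnectedSpace X] (hν : Continuous ν)
    (hmono : StrictMonoOn ν {K | IsConnected (K : Set X)}) {t : ℝ}
    (hcover : ∀ x : X, ∃ K : NonemptyCompacts X, IsConnected (K : Set X) ∧ x ∈ K ∧ ν K = t) :
    IsPreconnected {K : NonemptyCompacts X | IsConnected (K : Set X) ∧ ν K = t} := by
  set Λ := {K : NonemptyCompacts X | IsConnected (K : Set X) ∧ ν K = t}
  have hΛ : IsClosed Λ := isClosed_setOf_isConnected.inter (isClosed_eq hν continuous_const)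
  rw [isPreconnected_closed_iff]
  rintro 𝒰 𝒱 h𝒰 h𝒱 hΛ𝒰𝒱 ⟨P, hPΛ, hP𝒰⟩ ⟨Q, hQΛ, hQ𝒱⟩
  -- The members of `Λ ∩ 𝒰` and of `Λ ∩ 𝒱` cover `X` by two closed sets, which must meet.
  have hunion : ∀ {𝒲}, IsClosed 𝒲 → IsClosed (⋃ K ∈ Λ ∩ 𝒲, (K : Set X)) := fun h𝒲 =>
    (isCompact_biUnion_coe_of_isCompact (hΛ.inter h𝒲).isCompact).isClosed
  have hX : univ ⊆ (⋃ K ∈ Λ ∩ 𝒰, (K : Set X)) ∪ ⋃ K ∈ Λ ∩ 𝒱, (K : Set X) := fun x _ => by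
    obtain ⟨K, hK, hxK, hKt⟩ := hcover x
    simp only [mem_union, mem_iUnion₂]
    exact (hΛ𝒰𝒱 ⟨hK, hKt⟩).imp (fun h => ⟨K, ⟨⟨hK, hKt⟩, h⟩, hxK⟩) fun h => ⟨K, ⟨⟨hK, hKt⟩, h⟩, hxK⟩
  obtain ⟨y, hyP⟩ := P.nonempty
  obtain ⟨z, hzQ⟩ := Q.nonempty
  obtain ⟨x, -, hx𝒰, hx𝒱⟩ := isPreconnected_closed_iff.mp isPreconnected_univ _ _ (hunion h𝒰)
    (hunion h𝒱) hX ⟨y, trivial, mem_biUnion ⟨hPΛ, hP𝒰⟩ hyP⟩ ⟨z, trivial, mem_biUnion ⟨hQΛ, hQ𝒱⟩ hzQ⟩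
  obtain ⟨P', ⟨hP'Λ, hP'𝒰⟩, hxP'⟩ := mem_iUnion₂.mp hx𝒰
  obtain ⟨Q', ⟨hQ'Λ, hQ'𝒱⟩, hxQ'⟩ := mem_iUnion₂.mp hx𝒱
  obtain ⟨𝒢, h𝒢Λ, h𝒢, hP'𝒢, hQ'𝒢⟩ := exists_isPreconnected_subset_level hν hmono hP'Λ.1 hQ'Λ.1
    hxP' hxQ' hP'Λ.2 hQ'Λ.2
  obtain ⟨K, hK𝒢, hK⟩ := isPreconnected_closed_iff.mp h𝒢 𝒰 𝒱 h𝒰 h𝒱 (h𝒢Λ.trans hΛ𝒰𝒱)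
    ⟨P', hP'𝒢, hP'𝒰⟩ ⟨Q', hQ'𝒢, hQ'𝒱⟩
  exact ⟨K, h𝒢Λ hK𝒢, hK⟩

end Level

end TopologicalSpace.NonemptyCompacts

theorem whitney_level_is_continuum
    {X : Type*} [MetricSpace X] [CompactSpace X] [ConnectedSpace X] [Nonempty X]
    (μ : SubC X → ℝ) (hμ : IsWhitneyMap μ) (t : ℝ) (ht0 : 0 ≤ t)
    (ht : t ≤ μ (wholeC X)) :
    (Set.Nonempty {K : SubC X | μ K = t}) ∧ IsCompact {K : SubC X | μ K = t} ∧
      IsConnected {K : SubC X | μ K = t} := by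
  obtain ⟨hcont, hzero, hstrict⟩ := hμ
  have hC : IsClosed {K : NonemptyCompacts X | IsConnected (K : Set X)} :=
    NonemptyCompacts.isClosed_setOf_isConnected
  have : CompactSpace (SubC X) := isCompact_iff_compactSpace.mp hC.isCompact
  -- Extending `μ` to all of `NonemptyCompacts X` lets us evaluate it on `K ⊔ L` before knowing
  -- that `K ⊔ L` is connected.
  obtain ⟨ν, hνμ⟩ := ContinuousMap.exists_extension' hC.isClosedEmbedding_subtypeVal ⟨μ, hcont⟩
  have hν : ∀ K : SubC X, ν K.1 = μ K := congrFun hνμ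
  have hmono : StrictMonoOn ν {K | IsConnected (K : Set X)} := fun K hK L hL hKL =>
    (hν ⟨K, hK⟩).trans_lt <| (hstrict ⟨K, hK⟩ ⟨L, hL⟩ (SetLike.coe_ssubset_coe.mpr hKL)).trans_eq
      (hν ⟨L, hL⟩).symm
  have hcover (x : X) : ∃ K : NonemptyCompacts X, IsConnected (K : Set X) ∧ x ∈ K ∧ ν K = t := by
    have hx := NonemptyCompacts.isConnected_coe_singleton x
    obtain ⟨K, hK, hxK, hKt⟩ := NonemptyCompacts.exists_isConnected_mem_Icc_eq ν.continuous hmono hx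
      (B := (wholeC X).1) (t := t) isConnected_univ (subset_univ _)
      ⟨by rwa [hν ⟨_, hx⟩, hzero x ⟨_, hx⟩ (NonemptyCompacts.coe_singleton x)], by rwa [hν]⟩
    exact ⟨K, hK, hxK.1 rfl, hKt⟩
  have hlevel : Subtype.val '' {K : SubC X | μ K = t} =
      {K : NonemptyCompacts X | IsConnected (K : Set X) ∧ ν K = t} := by
    ext K
    refine ⟨?_, fun ⟨hK, hKt⟩ => ⟨⟨K, hK⟩, (hν ⟨K, hK⟩).symm.trans hKt, rfl⟩⟩
    rintro ⟨K, hKt, rfl⟩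
    exact ⟨K.2, (hν K).trans hKt⟩
  obtain ⟨K, hK, -, hKt⟩ := hcover (Classical.arbitrary X)
  have hne : Set.Nonempty {K : SubC X | μ K = t} := ⟨⟨K, hK⟩, (hν ⟨K, hK⟩).symm.trans hKt⟩
  refine ⟨hne, (isClosed_eq hcont continuous_const).isCompact, hne, ?_⟩
  refine hC.isClosedEmbedding_subtypeVal.isInducing.isPreconnected_image.mp ?_
  convert NonemptyCompacts.isPreconnected_level ν.continuous hmono hcover using 1
  exact hlevel
end

section
/- Every proximately refinable function between continua is continuous. -/
/-- `f` is ε-continuous: every point has a neighborhood mapped into the ε-ball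
around its image. -/
def EpsContinuous {X Y : Type*} [TopologicalSpace X] [MetricSpace Y]
    (ε : ℝ) (f : X → Y) : Prop :=
  ∀ x : X, ∃ U : Set X, IsOpen U ∧ x ∈ U ∧ f '' U ⊆ Metric.ball (f x) ε

/-- `g` is a strong ε-function: every point of the codomain has an open
neighborhood whose preimage has diameter < ε. -/
def StrongEpsFunction {X Y : Type*} [MetricSpace X] [TopologicalSpace Y]
    (ε : ℝ) (g : X → Y) : Prop :=
  ∀ y : Y, ∃ V : Set Y, IsOpen V ∧ y ∈ V ∧ Metric.diam (g ⁻¹' V) < ε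

/-- A proximate ε-refinement of `f`. -/
def ProximateEpsRefinement {X Y : Type*} [MetricSpace X] [MetricSpace Y]
    (ε : ℝ) (f g : X → Y) : Prop :=
  Function.Surjective g ∧ EpsContinuous ε g ∧ StrongEpsFunction ε g ∧
    ∀ x, dist (f x) (g x) < ε

/-- A proximately refinable function. -/
def ProximatelyRefinable {X Y : Type*} [MetricSpace X] [MetricSpace Y]
    (f : X → Y) : Prop :=
  Function.Surjective f ∧ ∀ ε > (0 : ℝ), ∃ g : X → Y, ProximateEpsRefinement ε f g

theorem proximatelyRefinable_continuous
    {X Y : Type*} [MetricSpace X] [CompactSpace X] [ConnectedSpace X] [Nonempty X]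
    [MetricSpace Y] [CompactSpace Y] [ConnectedSpace Y] [Nonempty Y]
    (f : X → Y) (hf : ProximatelyRefinable f) : Continuous f := by
  rw [continuous_iff_continuousAt]
  intro x₀
  rw [ContinuousAt, Metric.tendsto_nhds]
  intro ε hε
  obtain ⟨g, _, hgc, _, hgd⟩ := hf.2 (ε/3) (by linarith)
  obtain ⟨U, hUo, hxU, hUb⟩ := hgc x₀
  filter_upwards [hUo.mem_nhds hxU] with x hx
  have h1 := hgd x
  have h2 := hgd x₀
  have h3 : dist (g x) (g x₀) < ε/3 := hUb ⟨x, hx, rfl⟩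
  calc dist (f x) (f x₀) ≤ dist (f x) (g x) + dist (g x) (g x₀) + dist (g x₀) (f x₀) :=
        dist_triangle4 _ _ _ _
    _ < ε/3 + ε/3 + ε/3 := by rw [dist_comm (g x₀)]; linarith
    _ = ε := by ring
end

section
/- Let X = Bd([0,1]²) ∪ ({1/2} × [0,1]) ⊆ ℝ², a colocally connected continuum, let Y be the quotient space obtained from X by collapsing the segment {1/2} × [0,1] to a point, and let f : X → Y be the quotient map. Then f is a surjective monotone map, X is colocally connected, and Y is not colocally connected. -/
open Set

/-- The boundary of the unit square together with the middle vertical segment. -/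
noncomputable def thetaSquare : Set (ℝ × ℝ) :=
  frontier (Icc (0:ℝ) 1 ×ˢ Icc (0:ℝ) 1) ∪ ({(1:ℝ)/2} ×ˢ Icc (0:ℝ) 1)

/-- The middle vertical segment of the unit square. -/
noncomputable def midSegment : Set (ℝ × ℝ) := {(1:ℝ)/2} ×ˢ Icc (0:ℝ) 1

/-- The relation collapsing the middle segment to a point. -/
def collapseRel (a b : ↥thetaSquare) : Prop :=
  a = b ∨ ((a : ℝ × ℝ) ∈ midSegment ∧ (b : ℝ × ℝ) ∈ midSegment)

/-- The quotient of `thetaSquare` obtained by collapsing the middle segment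
to a point, with the quotient topology. -/
abbrev collapsedTheta : Type := Quot collapseRel

/-- The quotient map. -/
def collapseMap : ↥thetaSquare → collapsedTheta := Quot.mk collapseRel

/-! ### Auxiliary material -/

lemma theta_eq : thetaSquare =
    (Icc (0:ℝ) 1 ×ˢ ({0, 1} : Set ℝ)) ∪ (({0, 1/2, 1} : Set ℝ) ×ˢ Icc (0:ℝ) 1) := by
  unfold thetaSquare
  rw [frontier_prod_eq, closure_Icc, frontier_Icc (by norm_num : (0:ℝ) ≤ 1)]
  ext ⟨x, y⟩
  simp only [mem_union, mem_prod, mem_insert_iff, mem_singleton_iff, mem_Icc]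
  tauto

lemma segh_sub {p q r s b c d : ℝ} (hb : b = 0 ∨ b = 1) (hsub : Icc c d ⊆ Icc (0:ℝ) 1)
    (h : ∀ x ∈ Icc c d, ((x, b) : ℝ × ℝ) ∉ Ioo p q ×ˢ Ioo r s) :
    Icc c d ×ˢ ({b} : Set ℝ) ⊆ thetaSquare \ (Ioo p q ×ˢ Ioo r s) := by
  rintro ⟨x, y⟩ ⟨hx, hy⟩
  simp only [mem_singleton_iff] at hy
  subst hy
  refine ⟨?_, h x hx⟩
  rw [theta_eq]
  exact Or.inl ⟨hsub hx, by rcases hb with h | h <;> simp [h]⟩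

lemma segv_sub {p q r s a c d : ℝ} (ha : a = 0 ∨ a = 1/2 ∨ a = 1)
    (hsub : Icc c d ⊆ Icc (0:ℝ) 1)
    (h : ∀ y ∈ Icc c d, ((a, y) : ℝ × ℝ) ∉ Ioo p q ×ˢ Ioo r s) :
    ({a} : Set ℝ) ×ˢ Icc c d ⊆ thetaSquare \ (Ioo p q ×ˢ Ioo r s) := by
  rintro ⟨x, y⟩ ⟨hx, hy⟩
  simp only [mem_singleton_iff] at hx
  subst hx
  refine ⟨?_, h y hy⟩
  rw [theta_eq]
  exact Or.inr ⟨by rcases ha with h | h | h <;> simp [h], hsub hy⟩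

lemma preH (c d b : ℝ) : IsPreconnected (Icc c d ×ˢ ({b} : Set ℝ)) :=
  isPreconnected_Icc.prod isPreconnected_singleton

lemma preV (a c d : ℝ) : IsPreconnected (({a} : Set ℝ) ×ˢ Icc c d) :=
  isPreconnected_singleton.prod isPreconnected_Icc

/-- Master lemma: removing a small open rectangle from the theta-curve leaves a
connected set. -/
lemma theta_master {p q r s : ℝ} (hpq : q - p ≤ 1/4) (hrs : s - r ≤ 1/4) :
    IsConnected (thetaSquare \ (Ioo p q ×ˢ Ioo r s)) := by
  -- choose a boundary vertical line not hit by the rectangle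
  obtain ⟨x1, hx1m, hx1⟩ : ∃ x1 : ℝ, (x1 = 0 ∨ x1 = 1) ∧ x1 ∉ Ioo p q := by
    by_cases h : (0:ℝ) ∈ Ioo p q
    · refine ⟨1, Or.inr rfl, fun h1 => ?_⟩
      rw [mem_Ioo] at h h1; linarith
    · exact ⟨0, Or.inl rfl, h⟩
  -- choose a horizontal edge not hit by the rectangle
  obtain ⟨y1, hy1m, hy1⟩ : ∃ y1 : ℝ, (y1 = 0 ∨ y1 = 1) ∧ y1 ∉ Ioo r s := by
    by_cases h : (0:ℝ) ∈ Ioo r s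
    · refine ⟨1, Or.inr rfl, fun h1 => ?_⟩
      rw [mem_Ioo] at h h1; linarith
    · exact ⟨0, Or.inl rfl, h⟩
  have hx1I : x1 ∈ Icc (0:ℝ) 1 := by rcases hx1m with h | h <;> simp [h]
  have hy1I : y1 ∈ Icc (0:ℝ) 1 := by rcases hy1m with h | h <;> simp [h]
  have hx1m' : x1 = 0 ∨ x1 = 1/2 ∨ x1 = 1 := by tauto
  -- the full vertical segment at x1 and horizontal edge at y1 are disjoint from the rectangle
  have hVx1 : ({x1} : Set ℝ) ×ˢ Icc (0:ℝ) 1 ⊆ thetaSquare \ (Ioo p q ×ˢ Ioo r s) :=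
    segv_sub hx1m' Subset.rfl (fun y _ h => hx1 h.1)
  have hHy1 : Icc (0:ℝ) 1 ×ˢ ({y1} : Set ℝ) ⊆ thetaSquare \ (Ioo p q ×ˢ Ioo r s) :=
    segh_sub hy1m Subset.rfl (fun x _ h => hy1 h.2)
  have hcK : (x1, y1) ∈ thetaSquare \ (Ioo p q ×ˢ Ioo r s) :=
    hHy1 ⟨hx1I, rfl⟩
  refine ⟨⟨(x1, y1), hcK⟩, isPreconnected_of_forall (x1, y1) ?_⟩
  rintro ⟨u, v⟩ ⟨hX, hR⟩
  rw [theta_eq] at hX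
  simp only [mem_union, mem_prod, mem_insert_iff, mem_singleton_iff] at hX
  rcases hX with ⟨hu, hv⟩ | ⟨hu, hv⟩
  · -- (u,v) is on a horizontal edge, v = 0 or v = 1
    by_cases hvio : v ∈ Ioo r s
    · -- the rectangle cuts this horizontal edge; u is outside its x-range
      have hunot : u ∉ Ioo p q := fun h => hR ⟨h, hvio⟩
      have hvI : v ∈ Icc (0:ℝ) 1 := by rcases hv with h | h <;> simp [h]
      have hside : u ≤ p ∨ q ≤ u := by
        rw [mem_Ioo] at hunot; push_neg at hunot
        rcases le_or_gt u p with h | h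
        · exact Or.inl h
        · exact Or.inr (hunot h)
      rcases hside with h | h
      · -- go left to the corner (0, v), then down/up the left edge
        have h0pq : (0:ℝ) ∉ Ioo p q := fun h0 => by
          rw [mem_Ioo] at h0; linarith [hu.1]
        refine ⟨(({0} : Set ℝ) ×ˢ Icc (0:ℝ) 1 ∪ Icc (0:ℝ) 1 ×ˢ ({y1} : Set ℝ)) ∪
          Icc 0 u ×ˢ ({v} : Set ℝ), ?_, ?_, ?_, ?_⟩
        · refine union_subset (union_subset ?_ hHy1) ?_
          · exact segv_sub (Or.inl rfl) Subset.rfl (fun y _ hh => h0pq hh.1)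
          · refine segh_sub hv (fun t ht => ⟨ht.1, le_trans ht.2 hu.2⟩) ?_
            rintro x hx hmem
            simp only [mem_prod, mem_Ioo] at hmem
            linarith [hx.2, hmem.1.1]
        · exact Or.inl (Or.inr ⟨hx1I, rfl⟩)
        · exact Or.inr ⟨⟨hu.1, le_rfl⟩, rfl⟩
        · refine IsPreconnected.union (0, v) ?_ ?_ ?_ (preH 0 u v)
          · exact Or.inl ⟨rfl, hvI⟩
          · exact ⟨⟨le_rfl, hu.1⟩, rfl⟩
          · exact IsPreconnected.union (0, y1) ⟨rfl, hy1I⟩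
              ⟨⟨le_rfl, by norm_num⟩, rfl⟩ (preV 0 0 1) (preH 0 1 y1)
      · -- go right to the corner (1, v)
        have h1pq : (1:ℝ) ∉ Ioo p q := fun h0 => by
          rw [mem_Ioo] at h0; linarith [hu.2]
        refine ⟨(({1} : Set ℝ) ×ˢ Icc (0:ℝ) 1 ∪ Icc (0:ℝ) 1 ×ˢ ({y1} : Set ℝ)) ∪
          Icc u 1 ×ˢ ({v} : Set ℝ), ?_, ?_, ?_, ?_⟩
        · refine union_subset (union_subset ?_ hHy1) ?_
          · exact segv_sub (Or.inr (Or.inr rfl)) Subset.rfl (fun y _ hh => h1pq hh.1)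
          · refine segh_sub hv (fun t ht => ⟨le_trans hu.1 ht.1, ht.2⟩) ?_
            rintro x hx hmem
            simp only [mem_prod, mem_Ioo] at hmem
            linarith [hx.1, hmem.1.2]
        · exact Or.inl (Or.inr ⟨hx1I, rfl⟩)
        · exact Or.inr ⟨⟨le_rfl, hu.2⟩, rfl⟩
        · refine IsPreconnected.union (1, v) ?_ ?_ ?_ (preH u 1 v)
          · exact Or.inl ⟨rfl, hvI⟩
          · exact ⟨⟨hu.2, le_rfl⟩, rfl⟩
          · exact IsPreconnected.union (1, y1) ⟨rfl, hy1I⟩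
              ⟨⟨by norm_num, le_rfl⟩, rfl⟩ (preV 1 0 1) (preH 0 1 y1)
    · -- the horizontal edge at height v is untouched
      refine ⟨(({x1} : Set ℝ) ×ˢ Icc (0:ℝ) 1 ∪ Icc (0:ℝ) 1 ×ˢ ({y1} : Set ℝ)) ∪
        Icc (0:ℝ) 1 ×ˢ ({v} : Set ℝ), ?_, ?_, ?_, ?_⟩
      · exact union_subset (union_subset hVx1 hHy1)
          (segh_sub hv Subset.rfl (fun x _ hh => hvio hh.2))
      · exact Or.inl (Or.inr ⟨hx1I, rfl⟩)
      · exact Or.inr ⟨hu, rfl⟩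
      · refine IsPreconnected.union (x1, v) ?_ ?_ ?_ (preH 0 1 v)
        · exact Or.inl ⟨rfl, by rcases hv with h | h <;> simp [h]⟩
        · exact ⟨hx1I, rfl⟩
        · exact IsPreconnected.union (x1, y1) ⟨rfl, hy1I⟩ ⟨hx1I, rfl⟩
            (preV x1 0 1) (preH 0 1 y1)
  · -- (u,v) is on a vertical segment, u ∈ {0, 1/2, 1}
    have huI : u ∈ Icc (0:ℝ) 1 := by rcases hu with h | h | h <;> simp [h] <;> norm_num
    by_cases huio : u ∈ Ioo p q
    · -- the rectangle cuts this vertical segment; v is outside its y-range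
      have hvnot : v ∉ Ioo r s := fun h => hR ⟨huio, h⟩
      have hside : v ≤ r ∨ s ≤ v := by
        rw [mem_Ioo] at hvnot; push_neg at hvnot
        rcases le_or_gt v r with h | h
        · exact Or.inl h
        · exact Or.inr (hvnot h)
      rcases hside with h | h
      · -- go down to the bottom edge
        have h0rs : (0:ℝ) ∉ Ioo r s := fun h0 => by
          rw [mem_Ioo] at h0; linarith [hv.1]
        refine ⟨((Icc (0:ℝ) 1 ×ˢ ({0} : Set ℝ) ∪ ({x1} : Set ℝ) ×ˢ Icc (0:ℝ) 1) ∪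
          Icc (0:ℝ) 1 ×ˢ ({y1} : Set ℝ)) ∪ ({u} : Set ℝ) ×ˢ Icc 0 v, ?_, ?_, ?_, ?_⟩
        · refine union_subset (union_subset (union_subset ?_ hVx1) hHy1) ?_
          · exact segh_sub (Or.inl rfl) Subset.rfl (fun x _ hh => h0rs hh.2)
          · refine segv_sub hu (fun t ht => ⟨ht.1, le_trans ht.2 hv.2⟩) ?_
            rintro y hy hmem
            simp only [mem_prod, mem_Ioo] at hmem
            linarith [hy.2, hmem.2.1]
        · exact Or.inl (Or.inr ⟨hx1I, rfl⟩)
        · exact Or.inr ⟨rfl, ⟨hv.1, le_rfl⟩⟩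
        · refine IsPreconnected.union (u, 0) ?_ ?_ ?_ (preV u 0 v)
          · exact Or.inl (Or.inl ⟨huI, rfl⟩)
          · exact ⟨rfl, ⟨le_rfl, hv.1⟩⟩
          · refine IsPreconnected.union (x1, y1) ?_ ⟨hx1I, rfl⟩ ?_ (preH 0 1 y1)
            · exact Or.inr ⟨rfl, hy1I⟩
            · exact IsPreconnected.union (x1, 0) ⟨hx1I, rfl⟩ ⟨rfl, by norm_num⟩
                (preH 0 1 0) (preV x1 0 1)
      · -- go up to the top edge
        have h1rs : (1:ℝ) ∉ Ioo r s := fun h0 => by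
          rw [mem_Ioo] at h0; linarith [hv.2]
        refine ⟨((Icc (0:ℝ) 1 ×ˢ ({1} : Set ℝ) ∪ ({x1} : Set ℝ) ×ˢ Icc (0:ℝ) 1) ∪
          Icc (0:ℝ) 1 ×ˢ ({y1} : Set ℝ)) ∪ ({u} : Set ℝ) ×ˢ Icc v 1, ?_, ?_, ?_, ?_⟩
        · refine union_subset (union_subset (union_subset ?_ hVx1) hHy1) ?_
          · exact segh_sub (Or.inr rfl) Subset.rfl (fun x _ hh => h1rs hh.2)
          · refine segv_sub hu (fun t ht => ⟨le_trans hv.1 ht.1, ht.2⟩) ?_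
            rintro y hy hmem
            simp only [mem_prod, mem_Ioo] at hmem
            linarith [hy.1, hmem.2.2]
        · exact Or.inl (Or.inr ⟨hx1I, rfl⟩)
        · exact Or.inr ⟨rfl, ⟨le_rfl, hv.2⟩⟩
        · refine IsPreconnected.union (u, 1) ?_ ?_ ?_ (preV u v 1)
          · exact Or.inl (Or.inl ⟨huI, rfl⟩)
          · exact ⟨rfl, ⟨hv.2, le_rfl⟩⟩
          · refine IsPreconnected.union (x1, y1) ?_ ⟨hx1I, rfl⟩ ?_ (preH 0 1 y1)
            · exact Or.inr ⟨rfl, hy1I⟩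
            · exact IsPreconnected.union (x1, 1) ⟨hx1I, rfl⟩ ⟨rfl, by norm_num⟩
                (preH 0 1 1) (preV x1 0 1)
    · -- the whole vertical segment at u is untouched
      refine ⟨({u} : Set ℝ) ×ˢ Icc (0:ℝ) 1 ∪ Icc (0:ℝ) 1 ×ˢ ({y1} : Set ℝ), ?_, ?_, ?_, ?_⟩
      · exact union_subset (segv_sub hu Subset.rfl (fun y _ hh => huio hh.1)) hHy1
      · exact Or.inr ⟨hx1I, rfl⟩
      · exact Or.inl ⟨rfl, hv⟩
      · exact IsPreconnected.union (u, y1) ⟨rfl, hy1I⟩ ⟨huI, rfl⟩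
          (preV u 0 1) (preH 0 1 y1)

/-- `thetaSquare` is colocally connected. -/
lemma theta_coloc : ColocallyConnected ↥thetaSquare := by
  rintro z V hV
  obtain ⟨W, hW, hWV⟩ := (mem_nhds_subtype _ _ _).mp hV
  obtain ⟨ε, hε, hball⟩ := Metric.mem_nhds_iff.mp hW
  set a := (z : ℝ × ℝ).1 with ha
  set b := (z : ℝ × ℝ).2 with hb
  set δ : ℝ := min (ε/2) (1/8) with hδ
  have hδ0 : 0 < δ := lt_min (by linarith) (by norm_num)
  have hδε : δ < ε := lt_of_le_of_lt (min_le_left _ _) (by linarith)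
  have hδ8 : δ ≤ 1/8 := min_le_right _ _
  set R : Set (ℝ × ℝ) := Ioo (a - δ) (a + δ) ×ˢ Ioo (b - δ) (b + δ) with hR
  refine ⟨Subtype.val ⁻¹' R, (IsOpen.prod isOpen_Ioo isOpen_Ioo).preimage
    continuous_subtype_val, ?_, ?_, ?_⟩
  · exact ⟨⟨by linarith, by linarith⟩, ⟨by linarith, by linarith⟩⟩
  · intro w hw
    apply hWV
    apply hball
    rw [Metric.mem_ball, Prod.dist_eq]
    have h1 : dist (w : ℝ × ℝ).1 a < δ := by
      rw [Real.dist_eq, abs_lt]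
      obtain ⟨⟨h1, h2⟩, _⟩ := hw
      constructor <;> linarith
    have h2 : dist (w : ℝ × ℝ).2 b < δ := by
      rw [Real.dist_eq, abs_lt]
      obtain ⟨_, ⟨h1, h2⟩⟩ := hw
      constructor <;> linarith
    exact lt_of_lt_of_le (max_lt h1 h2) hδε.le
  · have hmaster := theta_master
      (p := a - δ) (q := a + δ) (r := b - δ) (s := b + δ)
      (by linarith) (by linarith)
    have himg : Subtype.val '' ((Subtype.val ⁻¹' R : Set ↥thetaSquare))ᶜ = thetaSquare \ R := by
      rw [← preimage_compl, Subtype.image_preimage_coe, ← diff_eq]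
    obtain ⟨⟨w, hwX, hwR⟩, hpre⟩ := hmaster
    refine ⟨⟨⟨w, hwX⟩, hwR⟩, ?_⟩
    rw [← Topology.IsInducing.subtypeVal.isPreconnected_image, himg]
    exact hpre

lemma midSeg_mem_theta {x : ℝ × ℝ} (h : x ∈ midSegment) : x ∈ thetaSquare :=
  Or.inr h

lemma mid_of_fst {x : ↥thetaSquare} (h : (x : ℝ × ℝ).1 = 1/2) :
    (x : ℝ × ℝ) ∈ midSegment := by
  obtain ⟨⟨u, v⟩, hx⟩ := x
  have h' : u = 1/2 := h
  have hx' : ((u, v) : ℝ × ℝ) ∈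
      (Icc (0:ℝ) 1 ×ˢ ({0, 1} : Set ℝ)) ∪ (({0, 1/2, 1} : Set ℝ) ×ˢ Icc (0:ℝ) 1) := by
    rw [← theta_eq]; exact hx
  show ((u, v) : ℝ × ℝ) ∈ midSegment
  rcases hx' with ⟨_, hv⟩ | ⟨_, hv⟩
  · simp only [mem_insert_iff, mem_singleton_iff] at hv
    exact ⟨h', by rcases hv with h'' | h'' <;> simp [h'']⟩
  · exact ⟨h', hv⟩

/-- First coordinate, well-defined on the quotient. -/
noncomputable def fstTheta : collapsedTheta → ℝ :=
  Quot.lift (fun x => (x : ℝ × ℝ).1) (by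
    rintro a b (rfl | ⟨ha, hb⟩)
    · rfl
    · show (a : ℝ × ℝ).1 = (b : ℝ × ℝ).1
      have ha' : (a : ℝ × ℝ).1 = 1/2 := ha.1
      have hb' : (b : ℝ × ℝ).1 = 1/2 := hb.1
      rw [ha', hb'])

lemma fstTheta_mk (x : ↥thetaSquare) : fstTheta (collapseMap x) = (x : ℝ × ℝ).1 := rfl

lemma fstTheta_continuous : Continuous fstTheta :=
  continuous_quot_lift _ (continuous_fst.comp continuous_subtype_val)

open Classical in
/-- A representative choice function, well-defined on the quotient. -/
noncomputable def repTheta : collapsedTheta → ℝ × ℝ :=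
  Quot.lift (fun x => if (x : ℝ × ℝ) ∈ midSegment then ((1:ℝ)/2, (0:ℝ)) else x) (by
    rintro a b (rfl | ⟨ha, hb⟩)
    · rfl
    · simp [ha, hb])

open Classical in
lemma repTheta_mk (x : ↥thetaSquare) :
    repTheta (collapseMap x) =
      if (x : ℝ × ℝ) ∈ midSegment then ((1:ℝ)/2, (0:ℝ)) else x := rfl

lemma mid_mem_half_zero : ((1:ℝ)/2, (0:ℝ)) ∈ midSegment :=
  ⟨rfl, by norm_num⟩

lemma theta_fibers (y : collapsedTheta) : IsConnected (collapseMap ⁻¹' {y}) := by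
  classical
  obtain ⟨x, rfl⟩ := Quot.exists_rep y
  have hxmk : Quot.mk collapseRel x = collapseMap x := rfl
  rw [hxmk]
  by_cases hx : (x : ℝ × ℝ) ∈ midSegment
  · have hset : collapseMap ⁻¹' {collapseMap x} =
        Subtype.val ⁻¹' midSegment := by
      ext a
      simp only [mem_preimage, mem_singleton_iff]
      constructor
      · intro h
        have h2 := congrArg repTheta h
        rw [repTheta_mk, repTheta_mk, if_pos hx] at h2
        by_cases ha : (a : ℝ × ℝ) ∈ midSegment
        · exact ha
        · rw [if_neg ha] at h2
          rw [h2]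
          exact mid_mem_half_zero
      · intro h
        exact Quot.sound (Or.inr ⟨h, hx⟩)
    rw [hset]
    have himg : Subtype.val '' (Subtype.val ⁻¹' midSegment : Set ↥thetaSquare) = midSegment := by
      rw [Subtype.image_preimage_coe, inter_eq_right]
      exact fun w hw => midSeg_mem_theta hw
    refine ⟨⟨⟨((1:ℝ)/2, 0), midSeg_mem_theta mid_mem_half_zero⟩, mid_mem_half_zero⟩, ?_⟩
    rw [← Topology.IsInducing.subtypeVal.isPreconnected_image, himg]
    exact isPreconnected_singleton.prod isPreconnected_Icc
  · have hset : collapseMap ⁻¹' {collapseMap x} = {x} := by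
      ext a
      simp only [mem_preimage, mem_singleton_iff]
      constructor
      · intro h
        have h2 := congrArg repTheta h
        rw [repTheta_mk, repTheta_mk, if_neg hx] at h2
        by_cases ha : (a : ℝ × ℝ) ∈ midSegment
        · rw [if_pos ha] at h2
          exact absurd (mid_of_fst (by rw [← h2])) hx
        · rw [if_neg ha] at h2
          exact Subtype.ext h2
      · rintro rfl; rfl
    rw [hset]
    exact isConnected_singleton

lemma collapsed_not_coloc : ¬ ColocallyConnected collapsedTheta := by
  intro h
  have hm0 : (((1:ℝ)/2, (0:ℝ)) : ℝ × ℝ) ∈ thetaSquare :=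
    midSeg_mem_theta mid_mem_half_zero
  set m0 : ↥thetaSquare := ⟨((1:ℝ)/2, 0), hm0⟩ with hm0def
  set y0 : collapsedTheta := collapseMap m0 with hy0def
  have hVopen : IsOpen (fstTheta ⁻¹' Ioo (1/4 : ℝ) (3/4)) :=
    isOpen_Ioo.preimage fstTheta_continuous
  have hy0V : y0 ∈ fstTheta ⁻¹' Ioo (1/4 : ℝ) (3/4) := by
    show fstTheta y0 ∈ Ioo (1/4 : ℝ) (3/4)
    rw [hy0def, fstTheta_mk]
    constructor <;> norm_num
  obtain ⟨U, hUopen, hy0U, hUV, hUc⟩ := h y0 _ (hVopen.mem_nhds hy0V)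
  have hA0 : ((0:ℝ), (0:ℝ)) ∈ thetaSquare := by
    rw [theta_eq]; exact Or.inl ⟨by norm_num, by norm_num⟩
  have hB0 : ((1:ℝ), (0:ℝ)) ∈ thetaSquare := by
    rw [theta_eq]; exact Or.inl ⟨by norm_num, by norm_num⟩
  set A : collapsedTheta := collapseMap ⟨((0:ℝ), 0), hA0⟩ with hA
  set B : collapsedTheta := collapseMap ⟨((1:ℝ), 0), hB0⟩ with hB
  have hAU : A ∈ Uᶜ := by
    intro hmem
    have := hUV hmem
    have hfst : fstTheta A = 0 := rfl
    rw [mem_preimage, hfst] at this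
    exact absurd this.1 (by norm_num)
  have hBU : B ∈ Uᶜ := by
    intro hmem
    have := hUV hmem
    have hfst : fstTheta B = 1 := rfl
    rw [mem_preimage, hfst] at this
    exact absurd this.2 (by norm_num)
  obtain ⟨hne, hpre⟩ := hUc
  have hcover : Uᶜ ⊆ fstTheta ⁻¹' Iio (1/2 : ℝ) ∪ fstTheta ⁻¹' Ioi (1/2 : ℝ) := by
    intro w hw
    obtain ⟨x, rfl⟩ := Quot.exists_rep w
    have hxmk : Quot.mk collapseRel x = collapseMap x := rfl
    by_cases hfx : (x : ℝ × ℝ).1 = 1/2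
    · exfalso
      apply hw
      have : Quot.mk collapseRel x = y0 :=
        Quot.sound (Or.inr ⟨mid_of_fst hfx, mid_mem_half_zero⟩)
      rw [this]
      exact hy0U
    · rcases lt_or_gt_of_ne hfx with h' | h'
      · exact Or.inl h'
      · exact Or.inr h'
  obtain ⟨w, _, hw1, hw2⟩ := hpre (fstTheta ⁻¹' Iio (1/2 : ℝ))
    (fstTheta ⁻¹' Ioi (1/2 : ℝ))
    (isOpen_Iio.preimage fstTheta_continuous)
    (isOpen_Ioi.preimage fstTheta_continuous) hcover
    ⟨A, hAU, by show fstTheta A < 1/2; rw [show fstTheta A = 0 from rfl]; norm_num⟩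
    ⟨B, hBU, by show fstTheta B > 1/2; rw [show fstTheta B = 1 from rfl]; norm_num⟩
  have h1 : fstTheta w < 1/2 := hw1
  have h2 : 1/2 < fstTheta w := hw2
  linarith

theorem collapseMap_monotone_not_colocallyConnected :
    Function.Surjective collapseMap ∧ Continuous collapseMap ∧
      (∀ y : collapsedTheta, IsConnected (collapseMap ⁻¹' {y})) ∧
      ColocallyConnected ↥thetaSquare ∧ ¬ ColocallyConnected collapsedTheta := by
  refine ⟨fun y => Quot.exists_rep y, continuous_quot_mk, theta_fibers,
    theta_coloc, collapsed_not_coloc⟩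
end
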